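/- arXiv:2007.00640 — 7 statements merged into one kernel-verified Lean document; each statement's English description precedes it below -/
import Mathlib

section
/- Let W ∈ ℂ^{N×N} be Hermitian positive definite, let b ∈ ℂ^N be a unit vector, let x = W⁻¹b, let μ be the spectral measure of the pair (W,b), and let 1 ≤ k ≤ N. Then the infimum over y in the Krylov subspace K_k of ‖x − y‖_W² equals the infimum over all polynomials q with complex coefficients of degree at most k satisfying q(0) = 1 of ∫ |q(λ)|²/λ dμ(λ), and both infima are attained. -/
open MeasureTheory Matrix Polynomial
open scoped ComplexOrder

/-!
Write `W = U diag(λ) Uᴴ`. A Krylov vector is `y = p(W) b` with `deg p < k`, and since `b = W x`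
its residual is `x - y = q(W) x` for `q = 1 - X p`; these `q` are exactly the polynomials of
degree `≤ k` with `q(0) = 1`. In the eigenbasis
`‖q(W) x‖²_W = ∑ⱼ λⱼ |q(λⱼ)|² |(Uᴴx)ⱼ|² = ∑ⱼ |(Uᴴb)ⱼ|² |q(λⱼ)|² / λⱼ = ∫ |q|²/λ dμ`,
so both problems range over the same set of values. As `λ > 0`, `‖v‖_W = ‖diag(√λ) Uᴴ v‖` is a
Euclidean norm, and the orthogonal projection onto the (finite-dimensional) image of the Krylov
space attains the minimum.
-/

theorem MeasureTheory.integral_finset_sum_smul_dirac {ι α : Type*} [MeasurableSpace α]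
    [MeasurableSingletonClass α] (s : Finset ι) {w : ι → ℝ} (hw : ∀ i, 0 ≤ w i) (t : ι → α)
    (f : α → ℝ) :
    ∫ a, f a ∂(∑ i ∈ s, ENNReal.ofReal (w i) • Measure.dirac (t i)) = ∑ i ∈ s, w i * f (t i) := by
  have hint : ∀ i, Integrable f (ENNReal.ofReal (w i) • Measure.dirac (t i)) := fun i =>
    ((integrable_const (f (t i))).congr (ae_eq_dirac f).symm).smul_measure ENNReal.ofReal_ne_top
  rw [integral_finsetSum_measure fun i _ => hint i]
  refine Finset.sum_congr rfl fun i _ => ?_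
  rw [integral_smul_measure, integral_dirac, ENNReal.toReal_ofReal (hw i), smul_eq_mul]

theorem exists_isLeast_norm_map_sub_sq {𝕜 V E : Type*} [RCLike 𝕜] [AddCommGroup V] [Module 𝕜 V]
    [NormedAddCommGroup E] [InnerProductSpace 𝕜 E] (φ : V →ₗ[𝕜] E) (K : Submodule 𝕜 V)
    [FiniteDimensional 𝕜 K] (x : V) :
    ∃ m, IsLeast {r | ∃ y ∈ K, r = ‖φ (x - y)‖ ^ 2} m := by
  set L := K.map φ
  obtain ⟨y₀, hy₀, hφy₀⟩ := Submodule.mem_map.mp (L.starProjection_apply_mem (φ x))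
  refine ⟨‖φ (x - y₀)‖ ^ 2, ⟨y₀, hy₀, rfl⟩, ?_⟩
  rintro _ ⟨y, hy, rfl⟩
  gcongr
  rw [map_sub, map_sub, hφy₀, Submodule.starProjection_minimal]
  exact ciInf_le ⟨0, by rintro _ ⟨_, rfl⟩; positivity⟩ (⟨φ y, Submodule.mem_map_of_mem hy⟩ : L)

theorem Polynomial.natDegree_le_and_eval_zero_eq_one_iff {R : Type*} [CommRing R] [Nontrivial R]
    {q : R[X]} {k : ℕ} :
    q.natDegree ≤ k ∧ q.eval 0 = 1 ↔ ∃ p ∈ degreeLT R k, 1 - X * p = q := by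
  constructor
  · rintro ⟨hdeg, h0⟩
    have hq : q ≠ 0 := fun h => by simp [h] at h0
    refine ⟨-q.divX, ?_, ?_⟩
    · rw [mem_degreeLT, degree_neg]
      exact (degree_divX_lt hq).trans_le (degree_le_of_natDegree_le hdeg)
    · rw [← coeff_zero_eq_eval_zero] at h0
      calc 1 - X * -q.divX = q.divX * X + C (q.coeff 0) := by rw [h0, C_1]; ring
        _ = q := divX_mul_X_add q
  · rintro ⟨p, hp, rfl⟩
    refine ⟨?_, by simp⟩
    rcases eq_or_ne p 0 with rfl | hp0
    · simp
    have hpk := (natDegree_lt_iff_degree_lt hp0).mpr (mem_degreeLT.mp hp)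
    refine (natDegree_sub_le _ _).trans (max_le (by simp) ?_)
    exact natDegree_mul_le.trans (by simp; omega)

namespace Matrix

variable {n : Type*} [Fintype n]

noncomputable def spectralMeasure (U : Matrix n n ℂ) (d : n → ℝ) (b : n → ℂ) : Measure ℝ :=
  ∑ j, ENNReal.ofReal (‖(Uᴴ *ᵥ b) j‖ ^ 2) • Measure.dirac (d j)

variable [DecidableEq n]

theorem aeval_diagonal {R : Type*} [CommSemiring R] (d : n → R) (p : R[X]) :
    aeval (diagonal d) p = diagonal fun j => p.eval (d j) := by
  rw [← diagonalAlgHom_apply (R := R), aeval_algHom_apply, aeval_pi_apply]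
  rfl

section Krylov

variable {R : Type*} [CommRing R] (W : Matrix n n R)

theorem mem_span_range_pow_mulVec_iff (b y : n → R) (k : ℕ) :
    y ∈ Submodule.span R (Set.range fun i : Fin k => (W ^ (i : ℕ)) *ᵥ b) ↔
      ∃ p ∈ degreeLT R k, aeval W p *ᵥ b = y := by
  classical
  let f : R[X] →ₗ[R] n → R := (LinearMap.applyₗ b) ∘ₗ toLin'.toLinearMap ∘ₗ (aeval W).toLinearMap
  have hrange : (Set.range fun i : Fin k => (W ^ (i : ℕ)) *ᵥ b) =
      f '' ↑(Finset.image (X ^ · : ℕ → R[X]) (Finset.range k)) := by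
    ext v
    simp [f, Fin.exists_iff]
  rw [hrange, Submodule.span_image, ← degreeLT_eq_span_X_pow]
  rfl

theorem sub_aeval_mulVec_mulVec (p : R[X]) (x : n → R) :
    x - aeval W p *ᵥ (W *ᵥ x) = aeval W (1 - X * p) *ᵥ x := by
  rw [mul_comm, map_sub, map_one, map_mul, aeval_X, sub_mulVec, one_mulVec, mulVec_mulVec]

theorem exists_mem_span_range_pow_mulVec_sub_iff [Nontrivial R] (x : n → R) (k : ℕ)
    (P : (n → R) → Prop) :
    (∃ y ∈ Submodule.span R (Set.range fun i : Fin k => (W ^ (i : ℕ)) *ᵥ (W *ᵥ x)), P (x - y)) ↔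
      ∃ q : R[X], q.natDegree ≤ k ∧ q.eval 0 = 1 ∧ P (aeval W q *ᵥ x) := by
  simp only [mem_span_range_pow_mulVec_iff]
  constructor
  · rintro ⟨_, ⟨p, hp, rfl⟩, hP⟩
    obtain ⟨hdeg, h0⟩ := natDegree_le_and_eval_zero_eq_one_iff.mpr ⟨p, hp, rfl⟩
    exact ⟨_, hdeg, h0, sub_aeval_mulVec_mulVec W p x ▸ hP⟩
  · rintro ⟨q, hdeg, h0, hP⟩
    obtain ⟨p, hp, rfl⟩ := natDegree_le_and_eval_zero_eq_one_iff.mp ⟨hdeg, h0⟩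
    exact ⟨_, ⟨p, hp, rfl⟩, by rwa [sub_aeval_mulVec_mulVec]⟩

end Krylov

section Spectral

variable {U : Matrix n n ℂ}

theorem aeval_mul_mul_conjTranspose (hU : U ∈ unitaryGroup n ℂ) (A : Matrix n n ℂ) (p : ℂ[X]) :
    aeval (U * A * Uᴴ) p = U * aeval A p * Uᴴ :=
  aeval_algHom_apply (Unitary.conjStarAlgAut ℂ _ ⟨U, hU⟩) A p

theorem conjTranspose_mulVec_aeval_mulVec (hU : U ∈ unitaryGroup n ℂ) (d : n → ℂ) (p : ℂ[X])
    (v : n → ℂ) (j : n) :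
    (Uᴴ *ᵥ (aeval (U * diagonal d * Uᴴ) p *ᵥ v)) j = p.eval (d j) * (Uᴴ *ᵥ v) j := by
  rw [aeval_mul_mul_conjTranspose hU, aeval_diagonal, mulVec_mulVec, ← Matrix.mul_assoc,
    ← Matrix.mul_assoc, ← star_eq_conjTranspose, mem_unitaryGroup_iff'.mp hU, Matrix.one_mul,
    ← mulVec_mulVec, mulVec_diagonal]

theorem conjTranspose_mulVec_mulVec (hU : U ∈ unitaryGroup n ℂ) (d : n → ℂ) (v : n → ℂ) (j : n) :
    (Uᴴ *ᵥ ((U * diagonal d * Uᴴ) *ᵥ v)) j = d j * (Uᴴ *ᵥ v) j := by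
  simpa using conjTranspose_mulVec_aeval_mulVec hU d X v j

theorem pos_of_posDef_of_eq_mul_diagonal_mul_conjTranspose {W : Matrix n n ℂ} {d : n → ℝ}
    (hU : U ∈ unitaryGroup n ℂ) (hdec : W = U * diagonal (fun j => (d j : ℂ)) * Uᴴ)
    (hW : W.PosDef) (j : n) : 0 < d j := by
  subst hdec
  have hUU : Uᴴ * U = 1 := mem_unitaryGroup_iff'.mp hU
  have hinj : Function.Injective U.mulVec := Function.LeftInverse.injective (g := (Uᴴ *ᵥ ·))
    fun v => by simp only [mulVec_mulVec, hUU, one_mulVec]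
  have hD := hW.conjTranspose_mul_mul_same hinj
  rw [Matrix.mul_assoc, Matrix.mul_assoc, hUU, Matrix.mul_one, ← Matrix.mul_assoc, hUU,
    Matrix.one_mul, posDef_diagonal_iff] at hD
  exact Complex.zero_lt_real.mp (hD j)

theorem re_star_dotProduct_mul_diagonal_mul_conjTranspose_mulVec (U : Matrix n n ℂ) (d : n → ℝ)
    (v : n → ℂ) :
    (star v ⬝ᵥ (U * diagonal (fun j => (d j : ℂ)) * Uᴴ) *ᵥ v).re =
      ∑ j, d j * ‖(Uᴴ *ᵥ v) j‖ ^ 2 := by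
  rw [Matrix.mul_assoc, ← mulVec_mulVec, ← mulVec_mulVec, dotProduct_mulVec,
    ← conjTranspose_conjTranspose U, ← star_mulVec, conjTranspose_conjTranspose, dotProduct,
    Complex.re_sum]
  refine Finset.sum_congr rfl fun j _ => ?_
  rw [mulVec_diagonal, Pi.star_apply, mul_left_comm, Complex.re_ofReal_mul, Complex.star_def,
    Complex.conj_mul', ← Complex.ofReal_pow, Complex.ofReal_re]

theorem exists_linearMap_re_star_dotProduct_mulVec_eq_norm_sq {W : Matrix n n ℂ} {d : n → ℝ}
    (hdec : W = U * diagonal (fun j => (d j : ℂ)) * Uᴴ) (hd : ∀ j, 0 ≤ d j) :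
    ∃ φ : (n → ℂ) →ₗ[ℂ] EuclideanSpace ℂ n, ∀ v, (star v ⬝ᵥ W *ᵥ v).re = ‖φ v‖ ^ 2 := by
  subst hdec
  refine ⟨(WithLp.linearEquiv 2 ℂ (n → ℂ)).symm.toLinearMap ∘ₗ
    (diagonal (fun j => (√(d j) : ℂ)) * Uᴴ).mulVecLin, fun v => ?_⟩
  rw [re_star_dotProduct_mul_diagonal_mul_conjTranspose_mulVec, EuclideanSpace.norm_sq_eq]
  refine Finset.sum_congr rfl fun j _ => ?_
  change _ = ‖(((diagonal fun j => (√(d j) : ℂ)) * Uᴴ) *ᵥ v) j‖ ^ 2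
  rw [← mulVec_mulVec, mulVec_diagonal, norm_mul, mul_pow, Complex.norm_real,
    Real.norm_eq_abs, sq_abs, Real.sq_sqrt (hd j)]

theorem integral_norm_eval_sq_div_spectralMeasure_mulVec {W : Matrix n n ℂ} {d : n → ℝ}
    (hU : U ∈ unitaryGroup n ℂ) (hdec : W = U * diagonal (fun j => (d j : ℂ)) * Uᴴ)
    (hd : ∀ j, d j ≠ 0) (x : n → ℂ) (q : ℂ[X]) :
    ∫ t, ‖q.eval (t : ℂ)‖ ^ 2 / t ∂spectralMeasure U d (W *ᵥ x) =
      (star (aeval W q *ᵥ x) ⬝ᵥ W *ᵥ (aeval W q *ᵥ x)).re := by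
  subst hdec
  rw [spectralMeasure, integral_finset_sum_smul_dirac _ (fun j => by positivity),
    re_star_dotProduct_mul_diagonal_mul_conjTranspose_mulVec]
  refine Finset.sum_congr rfl fun j _ => ?_
  rw [conjTranspose_mulVec_mulVec hU, conjTranspose_mulVec_aeval_mulVec hU, norm_mul, norm_mul,
    Complex.norm_real, Real.norm_eq_abs, mul_pow, sq_abs]
  field_simp [hd j]

end Spectral

end Matrix

theorem stmt_0_general (N : ℕ)
    (W : Matrix (Fin N) (Fin N) ℂ) (hW : W.PosDef)
    (b : Fin N → ℂ)
    (U : Matrix (Fin N) (Fin N) ℂ) (hU : U ∈ Matrix.unitaryGroup (Fin N) ℂ)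
    (lam : Fin N → ℝ)
    (hdec : W = U * Matrix.diagonal (fun j => (lam j : ℂ)) * Uᴴ)
    (μ : Measure ℝ)
    (hμ : μ = ∑ j, ENNReal.ofReal (‖(Uᴴ.mulVec b) j‖ ^ 2) • Measure.dirac (lam j))
    (x : Fin N → ℂ) (hx : W.mulVec x = b)
    (k : ℕ) :
    ∃ m : ℝ,
      IsLeast {r : ℝ | ∃ y ∈ Submodule.span ℂ
          (Set.range fun i : Fin k => (W ^ (i : ℕ)).mulVec b),
          r = (star (x - y) ⬝ᵥ W.mulVec (x - y)).re} m ∧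
      IsLeast {r : ℝ | ∃ q : Polynomial ℂ, q.natDegree ≤ k ∧ q.eval 0 = 1 ∧
          r = ∫ t, ‖q.eval (t : ℂ)‖ ^ 2 / t ∂μ} m := by
  subst hx
  replace hμ : μ = spectralMeasure U lam (W *ᵥ x) := hμ
  subst hμ
  have hlam := pos_of_posDef_of_eq_mul_diagonal_mul_conjTranspose hU hdec hW
  obtain ⟨φ, hφ⟩ := exists_linearMap_re_star_dotProduct_mulVec_eq_norm_sq hdec fun j => (hlam j).le
  simp only [integral_norm_eval_sq_div_spectralMeasure_mulVec hU hdec fun j => (hlam j).ne', hφ]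
  refine (exists_isLeast_norm_map_sub_sq φ _ x).imp fun m hm => ⟨hm, ?_⟩
  convert hm using 3 with r
  exact (exists_mem_span_range_pow_mulVec_sub_iff W x k fun v => r = ‖φ v‖ ^ 2).symm

/-- For Hermitian positive definite `W`, a unit vector `b` with spectral
measure `μ` of the pair `(W, b)`, and `1 ≤ k ≤ N`, the infimum of `‖x - y‖_W²` over the
Krylov subspace `K_k` equals the infimum of `∫ |q(λ)|²/λ dμ` over polynomials `q` of degree
at most `k` with `q 0 = 1`, and both infima are attained. -/
theorem stmt_0 (N : ℕ) (hN : 0 < N)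
    (W : Matrix (Fin N) (Fin N) ℂ) (hW : W.PosDef)
    (b : Fin N → ℂ) (hb : ∑ j, ‖b j‖ ^ 2 = 1)
    (U : Matrix (Fin N) (Fin N) ℂ) (hU : U ∈ Matrix.unitaryGroup (Fin N) ℂ)
    (lam : Fin N → ℝ)
    (hdec : W = U * Matrix.diagonal (fun j => (lam j : ℂ)) * Uᴴ)
    (μ : Measure ℝ)
    (hμ : μ = ∑ j, ENNReal.ofReal (‖(Uᴴ.mulVec b) j‖ ^ 2) • Measure.dirac (lam j))
    (x : Fin N → ℂ) (hx : W.mulVec x = b)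
    (k : ℕ) (hk : 1 ≤ k) (hkN : k ≤ N) :
    ∃ m : ℝ,
      IsLeast {r : ℝ | ∃ y ∈ Submodule.span ℂ
          (Set.range fun i : Fin k => (W ^ (i : ℕ)).mulVec b),
          r = (star (x - y) ⬝ᵥ W.mulVec (x - y)).re} m ∧
      IsLeast {r : ℝ | ∃ q : Polynomial ℂ, q.natDegree ≤ k ∧ q.eval 0 = 1 ∧
          r = ∫ t, ‖q.eval (t : ℂ)‖ ^ 2 / t ∂μ} m :=
  stmt_0_general N W hW b U hU lam hdec μ hμ x hx k
end

section
/- Let k ≥ 1 and let μ be a finitely supported probability measure on (0,∞) whose support contains at least k+1 points. Let π_k = π_k(·;μ) be the monic orthogonal polynomial of degree k with respect to μ and let c_k(z) = ∫ π_k(λ)/(λ−z) dμ(λ). Then π_k(0) ≠ 0, and among all real polynomials q of degree at most k with q(0) = 1, the quantity ∫ q(λ)²/λ dμ(λ) is minimized uniquely at q = π_k/π_k(0), with minimum value c_k(0)/π_k(0). -/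
/-!
Write `B(f, g) = ∫ f g / λ dμ`, a positive definite form on polynomials of degree at most `k`
because the support of `μ` lies in `(0, ∞)` and has more than `k` points. If `d(0) = 0` then
`d / λ = divX d` has degree `< k`, so orthogonality of `π_k` gives `B(π_k, d) = 0`.
If `π_k(0) = 0`, taking `d = π_k` gives the impossible `B(π_k, π_k) = 0`; taking
`d = π_k - π_k(0)` gives `B(π_k, π_k) = π_k(0) c_k(0)`.
Every competitor is `q = π_k / π_k(0) + d` with `d(0) = 0`, so
`B(q, q) = B(π_k / π_k(0), π_k / π_k(0)) + B(d, d)`, and `B(d, d) > 0` unless `d = 0`.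
-/

open MeasureTheory Polynomial

lemma integral_finsetSum_smul_dirac {α : Type*} [MeasurableSpace α] [MeasurableSingletonClass α]
    (s : Finset α) {w : α → ℝ} (hw : ∀ x ∈ s, 0 ≤ w x) (f : α → ℝ) :
    ∫ t, f t ∂(∑ x ∈ s, ENNReal.ofReal (w x) • Measure.dirac x) = ∑ x ∈ s, w x * f x := by
  rw [integral_finsetSum_measure fun x _ =>
    (integrable_dirac enorm_lt_top).smul_measure ENNReal.ofReal_ne_top]
  refine Finset.sum_congr rfl fun x hx => ?_
  rw [integral_smul_measure, integral_dirac, ENNReal.toReal_ofReal (hw x hx), smul_eq_mul]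

namespace Polynomial

lemma eval_div_eq_eval_divX {K : Type*} [Field K] {p : K[X]} (hp : p.eval 0 = 0) {x : K}
    (hx : x ≠ 0) : p.eval x / x = p.divX.eval x := by
  conv_lhs => rw [← divX_mul_X_add p, coeff_zero_eq_eval_zero, hp]
  simp [hx]

lemma degree_divX_lt_of_natDegree_le {R : Type*} [Semiring R] {p : R[X]} {k : ℕ}
    (hp : p.natDegree ≤ k) : p.divX.degree < k := by
  rcases eq_or_ne p 0 with rfl | hp0
  · simp
  · exact (degree_divX_lt hp0).trans_le (degree_le_natDegree.trans (by exact_mod_cast hp))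

lemma sum_mul_eval_sq_pos {K : Type*} [Field K] [LinearOrder K] [IsStrictOrderedRing K]
    {s : Finset K} {g : K → K} (hg : ∀ x ∈ s, 0 < g x) {q : K[X]} (hq : q ≠ 0)
    (hdeg : q.natDegree < s.card) : 0 < ∑ x ∈ s, g x * q.eval x ^ 2 := by
  obtain ⟨x, hx, hqx⟩ : ∃ x ∈ s, q.eval x ≠ 0 := by
    by_contra! h
    exact hq (eq_zero_of_natDegree_lt_card_of_eval_eq_zero' q s h hdeg)
  exact Finset.sum_pos' (fun y hy => mul_nonneg (hg y hy).le (sq_nonneg _))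
    ⟨x, hx, mul_pos (hg x hx) (pow_two_pos_of_ne_zero hqx)⟩

end Polynomial

section OrthogonalPolynomial

variable {s : Finset ℝ} {w : ℝ → ℝ} {π : ℝ[X]} {k : ℕ}

lemma sum_mul_eval_mul_div_eq_zero (hs : ∀ x ∈ s, x ≠ 0)
    (horth : ∀ r : ℝ[X], r.degree < k → ∑ x ∈ s, w x * (π.eval x * r.eval x) = 0)
    {d : ℝ[X]} (hd : d.natDegree ≤ k) (hd0 : d.eval 0 = 0) :
    ∑ x ∈ s, w x * (π.eval x * d.eval x / x) = 0 := by
  rw [← horth _ (degree_divX_lt_of_natDegree_le hd)]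
  refine Finset.sum_congr rfl fun x hx => ?_
  rw [mul_div_assoc, eval_div_eq_eval_divX hd0 (hs x hx)]

lemma eval_zero_ne_zero_of_orthogonal (hs : ∀ x ∈ s, 0 < x) (hw : ∀ x ∈ s, 0 < w x)
    (horth : ∀ r : ℝ[X], r.degree < k → ∑ x ∈ s, w x * (π.eval x * r.eval x) = 0)
    (hπ : π ≠ 0) (hdeg : π.natDegree ≤ k) (hcard : k < s.card) : π.eval 0 ≠ 0 := by
  intro hπ0
  have hpos : 0 < ∑ x ∈ s, w x / x * π.eval x ^ 2 :=
    sum_mul_eval_sq_pos (fun x hx => div_pos (hw x hx) (hs x hx)) hπ (hdeg.trans_lt hcard)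
  have hzero := sum_mul_eval_mul_div_eq_zero (fun x hx => (hs x hx).ne') horth hdeg hπ0
  refine hpos.ne' (hzero ▸ Finset.sum_congr rfl fun x _ => ?_)
  ring

lemma sum_sq_div_eq_of_orthogonal (hs : ∀ x ∈ s, x ≠ 0)
    (horth : ∀ r : ℝ[X], r.degree < k → ∑ x ∈ s, w x * (π.eval x * r.eval x) = 0)
    (hdeg : π.natDegree ≤ k) (hπ0 : π.eval 0 ≠ 0) :
    ∑ x ∈ s, w x * ((π.eval x / π.eval 0) ^ 2 / x) =
      (∑ x ∈ s, w x * (π.eval x / x)) / π.eval 0 := by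
  set a := π.eval 0
  have hcross := sum_mul_eval_mul_div_eq_zero hs horth (d := π - C a)
    ((natDegree_sub_le _ _).trans (by simp [hdeg])) (by simp [a])
  rw [← sub_eq_zero, Finset.sum_div, ← Finset.sum_sub_distrib, ← zero_div (a ^ 2), ← hcross,
    Finset.sum_div]
  refine Finset.sum_congr rfl fun x hx => ?_
  have := hs x hx
  simp only [eval_sub, eval_C]
  field_simp

lemma sum_sq_div_lt_of_orthogonal (hs : ∀ x ∈ s, 0 < x) (hw : ∀ x ∈ s, 0 < w x)
    (horth : ∀ r : ℝ[X], r.degree < k → ∑ x ∈ s, w x * (π.eval x * r.eval x) = 0)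
    (hdeg : π.natDegree ≤ k) (hcard : k < s.card) (hπ0 : π.eval 0 ≠ 0)
    {q : ℝ[X]} (hq : q.natDegree ≤ k) (hq0 : q.eval 0 = 1) (hne : q ≠ C (π.eval 0)⁻¹ * π) :
    ∑ x ∈ s, w x * ((π.eval x / π.eval 0) ^ 2 / x) < ∑ x ∈ s, w x * (q.eval x ^ 2 / x) := by
  set a := π.eval 0
  set d := q - C a⁻¹ * π
  have hdk : d.natDegree ≤ k :=
    (natDegree_sub_le _ _).trans (max_le hq ((natDegree_C_mul_le _ _).trans hdeg))
  have hcross := sum_mul_eval_mul_div_eq_zero (fun x hx => (hs x hx).ne') horth hdk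
    (by simp [d, hq0, a, hπ0])
  have hpos : 0 < ∑ x ∈ s, w x / x * d.eval x ^ 2 :=
    sum_mul_eval_sq_pos (fun x hx => div_pos (hw x hx) (hs x hx)) (sub_ne_zero.2 hne)
      (hdk.trans_lt hcard)
  have hsplit : ∑ x ∈ s, w x * (q.eval x ^ 2 / x) = ∑ x ∈ s, w x * ((π.eval x / a) ^ 2 / x) +
      2 * a⁻¹ * ∑ x ∈ s, w x * (π.eval x * d.eval x / x) + ∑ x ∈ s, w x / x * d.eval x ^ 2 := by
    rw [Finset.mul_sum, ← Finset.sum_add_distrib, ← Finset.sum_add_distrib]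
    refine Finset.sum_congr rfl fun x hx => ?_
    have hqx : q.eval x = π.eval x / a + d.eval x := by simp [d, div_eq_inv_mul]
    rw [hqx]
    ring
  rw [hcross, mul_zero, add_zero] at hsplit
  linarith

end OrthogonalPolynomial

theorem stmt_2_general (k : ℕ)
    (s : Finset ℝ) (hcard : k + 1 ≤ s.card) (hspos : ∀ x ∈ s, 0 < x)
    (w : ℝ → ℝ) (hw : ∀ x ∈ s, 0 < w x)
    (μ : Measure ℝ) (hμ : μ = ∑ x ∈ s, ENNReal.ofReal (w x) • Measure.dirac x)
    (π : Polynomial ℝ) (hmonic : π.Monic) (hdeg : π.natDegree = k)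
    (horth : ∀ r : Polynomial ℝ, r.degree < (k : ℕ) →
      ∫ t, π.eval t * r.eval t ∂μ = 0) :
    π.eval 0 ≠ 0 ∧
    (∫ t, (π.eval t / π.eval 0) ^ 2 / t ∂μ = (∫ t, π.eval t / t ∂μ) / π.eval 0) ∧
    ∀ q : Polynomial ℝ, q.natDegree ≤ k → q.eval 0 = 1 →
      q ≠ Polynomial.C (π.eval 0)⁻¹ * π →
      (∫ t, π.eval t / t ∂μ) / π.eval 0 < ∫ t, (q.eval t) ^ 2 / t ∂μ := by
  have hs₀ : ∀ x ∈ s, x ≠ 0 := fun x hx => (hspos x hx).ne'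
  subst hμ
  simp only [integral_finsetSum_smul_dirac s fun x hx => (hw x hx).le] at horth ⊢
  have hπ0 := eval_zero_ne_zero_of_orthogonal hspos hw horth hmonic.ne_zero hdeg.le hcard
  refine ⟨hπ0, sum_sq_div_eq_of_orthogonal hs₀ horth hdeg.le hπ0, fun q hq hq0 hne => ?_⟩
  rw [← sum_sq_div_eq_of_orthogonal hs₀ horth hdeg.le hπ0]
  exact sum_sq_div_lt_of_orthogonal hspos hw horth hdeg.le hcard hπ0 hq hq0 hne

/-- For a finitely supported probability measure `μ` on `(0,∞)` whose support
has at least `k+1` points, with monic orthogonal polynomial `π` of degree `k`, we have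
`π 0 ≠ 0`, and among real polynomials `q` of degree at most `k` with `q 0 = 1` the quantity
`∫ q(λ)²/λ dμ` is uniquely minimized at `q = π / π 0`, with minimum value `c_k(0)/π(0)`
where `c_k(0) = ∫ π(λ)/λ dμ`. -/
theorem stmt_2 (k : ℕ) (hk : 1 ≤ k)
    (s : Finset ℝ) (hcard : k + 1 ≤ s.card) (hspos : ∀ x ∈ s, 0 < x)
    (w : ℝ → ℝ) (hw : ∀ x ∈ s, 0 < w x) (hsum : ∑ x ∈ s, w x = 1)
    (μ : Measure ℝ) (hμ : μ = ∑ x ∈ s, ENNReal.ofReal (w x) • Measure.dirac x)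
    (π : Polynomial ℝ) (hmonic : π.Monic) (hdeg : π.natDegree = k)
    (horth : ∀ r : Polynomial ℝ, r.degree < (k : ℕ) →
      ∫ t, π.eval t * r.eval t ∂μ = 0) :
    π.eval 0 ≠ 0 ∧
    (∫ t, (π.eval t / π.eval 0) ^ 2 / t ∂μ = (∫ t, π.eval t / t ∂μ) / π.eval 0) ∧
    ∀ q : Polynomial ℝ, q.natDegree ≤ k → q.eval 0 = 1 →
      q ≠ Polynomial.C (π.eval 0)⁻¹ * π →
      (∫ t, π.eval t / t ∂μ) / π.eval 0 < ∫ t, (q.eval t) ^ 2 / t ∂μ :=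
  stmt_2_general k s hcard hspos w hw μ hμ π hmonic hdeg horth
end

section
/- Let (α_j)_{j≥0} and (β_j)_{j≥0} be sequences of positive real numbers, and set a_0 = α_0², a_n = α_n² + β_{n−1}² for n ≥ 1, and b_n = α_n β_n for n ≥ 0. Define the complementary polynomials by σ_0 = 0, σ_1 = 1, and σ_{n+1}(x) = (x − a_n)σ_n(x) − b_{n−1}² σ_{n−1}(x) for n ≥ 1. Then for every k ≥ 1, σ_k(0) = (−1)^{k+1} Σ_{ℓ=0}^{k−1} (∏_{j=1}^{ℓ} β_{j−1}²)(∏_{j=ℓ+1}^{k−1} α_j²), where empty products equal 1. -/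
/-! Evaluated at `0`, the recurrence becomes `σₙ₊₁(0) = -aₙ σₙ(0) - bₙ₋₁² σₙ₋₁(0)`, a second-order
linear recurrence that determines `σₖ(0)` from `σ₀(0) = 0` and `σ₁(0) = 1`. With `Sₖ` the sum on the right,
`(-1)^(k+1) Sₖ` satisfies the same recurrence with the same initial values: splitting off the last
summand gives `Sₖ₊₁ = αₖ² Sₖ + ∏_{j<k} βⱼ²`, and eliminating the product between two consecutive
instances of this identity yields `Sₖ₊₂ = (αₖ₊₁² + βₖ²) Sₖ₊₁ - (αₖ βₖ)² Sₖ`. -/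

open Polynomial Finset

theorem Nat.eq_of_two_step_recurrence {R : Type*} {u v : ℕ → R} (f : ℕ → R → R → R)
    (h0 : u 0 = v 0) (h1 : u 1 = v 1)
    (hu : ∀ n, u (n + 2) = f n (u (n + 1)) (u n))
    (hv : ∀ n, v (n + 2) = f n (v (n + 1)) (v n)) : u = v := by
  funext n
  induction n using Nat.twoStepInduction with
  | zero => exact h0
  | one => exact h1
  | more n ihn ihn1 => rw [hu, hv, ihn, ihn1]

noncomputable def bidiagProdSum (α β : ℕ → ℝ) (k : ℕ) : ℝ :=
  ∑ ℓ ∈ range k, (∏ j ∈ range ℓ, β j ^ 2) * ∏ j ∈ Ico (ℓ + 1) k, α j ^ 2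

theorem bidiagProdSum_succ (α β : ℕ → ℝ) (k : ℕ) :
    bidiagProdSum α β (k + 1) = α k ^ 2 * bidiagProdSum α β k + ∏ j ∈ range k, β j ^ 2 := by
  have hsplit : ∀ ℓ ∈ range k, (∏ j ∈ range ℓ, β j ^ 2) * ∏ j ∈ Ico (ℓ + 1) (k + 1), α j ^ 2
      = α k ^ 2 * ((∏ j ∈ range ℓ, β j ^ 2) * ∏ j ∈ Ico (ℓ + 1) k, α j ^ 2) := fun ℓ hℓ => by
    rw [prod_Ico_succ_top (mem_range.mp hℓ)]
    ring
  rw [bidiagProdSum, sum_range_succ, sum_congr rfl hsplit, ← mul_sum, Ico_self, prod_empty,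
    mul_one, bidiagProdSum]

theorem bidiagProdSum_add_two (α β : ℕ → ℝ) (k : ℕ) :
    bidiagProdSum α β (k + 2) = (α (k + 1) ^ 2 + β k ^ 2) * bidiagProdSum α β (k + 1)
      - (α k * β k) ^ 2 * bidiagProdSum α β k := by
  have hk1 := bidiagProdSum_succ α β (k + 1)
  have hk := bidiagProdSum_succ α β k
  rw [prod_range_succ] at hk1
  rw [hk1, hk]
  ring

theorem stmt_7_general (α β : ℕ → ℝ)
    (a b : ℕ → ℝ)
    (ha : ∀ n, 1 ≤ n → a n = α n ^ 2 + β (n - 1) ^ 2)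
    (hb : ∀ n, b n = α n * β n)
    (σp : ℕ → Polynomial ℝ)
    (hσ0 : σp 0 = 0) (hσ1 : σp 1 = 1)
    (hrec : ∀ n, 1 ≤ n →
      σp (n + 1) = (Polynomial.X - Polynomial.C (a n)) * σp n
        - Polynomial.C (b (n - 1) ^ 2) * σp (n - 1)) :
    ∀ k : ℕ, 1 ≤ k →
      (σp k).eval 0 = (-1 : ℝ) ^ (k + 1) *
        ∑ ℓ ∈ Finset.range k,
          (∏ j ∈ Finset.range ℓ, β j ^ 2) *
            ∏ j ∈ Finset.Icc (ℓ + 1) (k - 1), α j ^ 2 := by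
  have hσ : (fun k => (σp k).eval 0) = fun k => (-1 : ℝ) ^ (k + 1) * bidiagProdSum α β k := by
    refine Nat.eq_of_two_step_recurrence
      (fun n x y => -(α (n + 1) ^ 2 + β n ^ 2) * x - (α n * β n) ^ 2 * y)
      (by simp [hσ0, bidiagProdSum]) (by simp [hσ1, bidiagProdSum]) (fun n => ?_) (fun n => ?_)
    · rw [hrec (n + 1) (by omega), ha (n + 1) (by omega), Nat.add_sub_cancel, hb]
      simp only [eval_sub, eval_mul, eval_X, eval_C]
      ring
    · rw [bidiagProdSum_add_two]
      ring
  intro k hk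
  have hkmin : ¬IsMin k := by rw [isMin_iff_eq_bot, Nat.bot_eq_zero]; omega
  rw [congrFun hσ k, bidiagProdSum]
  simp only [Icc_sub_one_right_eq_Ico_of_not_isMin hkmin]

/-- For positive sequences `α`, `β` and Jacobi data `a 0 = α 0 ^ 2`,
`a n = α n ^ 2 + β (n-1) ^ 2` (`n ≥ 1`), `b n = α n * β n`, the complementary polynomials
defined by `σp 0 = 0`, `σp 1 = 1`, `σp (n+1) = (X - C (a n)) σp n - C (b (n-1) ^ 2) σp (n-1)`
satisfy, for all `k ≥ 1`,
`(σp k).eval 0 = (-1)^{k+1} ∑_{ℓ=0}^{k-1} (∏_{j=1}^{ℓ} β_{j-1}²)(∏_{j=ℓ+1}^{k-1} α_j²)`. -/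
theorem stmt_7 (α β : ℕ → ℝ) (hα : ∀ j, 0 < α j) (hβ : ∀ j, 0 < β j)
    (a b : ℕ → ℝ) (ha0 : a 0 = α 0 ^ 2)
    (ha : ∀ n, 1 ≤ n → a n = α n ^ 2 + β (n - 1) ^ 2)
    (hb : ∀ n, b n = α n * β n)
    (σp : ℕ → Polynomial ℝ)
    (hσ0 : σp 0 = 0) (hσ1 : σp 1 = 1)
    (hrec : ∀ n, 1 ≤ n →
      σp (n + 1) = (Polynomial.X - Polynomial.C (a n)) * σp n
        - Polynomial.C (b (n - 1) ^ 2) * σp (n - 1)) :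
    ∀ k : ℕ, 1 ≤ k →
      (σp k).eval 0 = (-1 : ℝ) ^ (k + 1) *
        ∑ ℓ ∈ Finset.range k,
          (∏ j ∈ Finset.range ℓ, β j ^ 2) *
            ∏ j ∈ Finset.Icc (ℓ + 1) (k - 1), α j ^ 2 :=
  stmt_7_general α β a b ha hb σp hσ0 hσ1 hrec
end

section
/- Let N ≥ 2 and let H be an N×N real lower bidiagonal matrix with nonzero diagonal entries α_0,…,α_{N−1} and subdiagonal entries β_0,…,β_{N−2}; set T = HHᵀ. Let H̃ be the (N−1)×(N−1) matrix obtained by deleting the first row and first column of H, and set T̃ = H̃H̃ᵀ. Then T and T̃ are invertible and (T⁻¹)_{11} = α_0⁻²(1 + β_0² (T̃⁻¹)_{11}). -/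
open Matrix

/-! Since the first row of `H` is `α₀ e₀`, the first column `x` of `H⁻¹`, i.e. the solution of
`H x = e₀`, has `x₀ = α₀⁻¹`, and its tail `y` solves `H̃ y = -α₀⁻¹ β₀ e₀`, so that
`y = -α₀⁻¹ β₀ H̃⁻¹ e₀`. As `T⁻¹ = H⁻ᵀ H⁻¹`, we get
`(T⁻¹)₁₁ = ‖x‖² = α₀⁻² (1 + β₀² ‖H̃⁻¹ e₀‖²) = α₀⁻² (1 + β₀² (T̃⁻¹)₁₁)`. -/

namespace Matrix

section FirstRowZero

variable {K : Type*} [Field K] {m : ℕ} {M : Matrix (Fin (m + 1)) (Fin (m + 1)) K}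

theorem det_eq_mul_det_submatrix_succ_of_row_zero (hrow : ∀ j : Fin m, M 0 j.succ = 0) :
    M.det = M 0 0 * (M.submatrix Fin.succ Fin.succ).det := by
  rw [det_succ_row_zero, Fin.sum_univ_succ]
  simp [hrow]

theorem inv_col_zero_of_row_zero (hrow : ∀ j : Fin m, M 0 j.succ = 0) (hM : IsUnit M.det) :
    M⁻¹.col 0 = Fin.cons (M 0 0)⁻¹
      (-(M 0 0)⁻¹ • (M.submatrix Fin.succ Fin.succ)⁻¹ *ᵥ fun i ↦ M i.succ 0) := by
  have hsplit := hM
  rw [det_eq_mul_det_submatrix_succ_of_row_zero hrow, IsUnit.mul_iff, isUnit_iff_ne_zero] at hsplit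
  obtain ⟨h00, hsub⟩ := hsplit
  set x : Fin (m + 1) → K := Fin.cons (M 0 0)⁻¹
      (-(M 0 0)⁻¹ • (M.submatrix Fin.succ Fin.succ)⁻¹ *ᵥ fun i ↦ M i.succ 0)
  have hx : M *ᵥ x = Pi.single 0 1 := by
    funext i
    refine Fin.cases ?_ (fun i ↦ ?_) i
    · simp [mulVec, dotProduct, Fin.sum_univ_succ, hrow, x, h00]
    · have hrow_succ : (M *ᵥ x) i.succ =
          M i.succ 0 * x 0 + (M.submatrix Fin.succ Fin.succ *ᵥ Fin.tail x) i := by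
        simp only [mulVec, dotProduct, Fin.sum_univ_succ, submatrix_apply, Fin.tail]
      rw [hrow_succ]
      simp only [x, Fin.tail_cons, Fin.cons_zero, mulVec_smul, mulVec_mulVec,
        mul_nonsing_inv _ hsub, one_mulVec]
      simp [mul_comm]
  rw [← mulVec_single_one, ← hx, mulVec_mulVec, nonsing_inv_mul _ hM, one_mulVec]

theorem isUnit_det_submatrix_succ_of_row_zero (hrow : ∀ j : Fin m, M 0 j.succ = 0)
    (hM : IsUnit M.det) : IsUnit (M.submatrix Fin.succ Fin.succ).det :=
  isUnit_of_mul_isUnit_right (det_eq_mul_det_submatrix_succ_of_row_zero hrow ▸ hM)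

end FirstRowZero

theorem isUnit_det_mul_transpose_self {ι R : Type*} [Fintype ι] [DecidableEq ι] [CommRing R]
    {M : Matrix ι ι R} (hM : IsUnit M.det) : IsUnit (M * Mᵀ).det := by
  rw [det_mul, det_transpose]
  exact hM.mul hM

theorem inv_mul_transpose_self_apply {ι R : Type*} [Fintype ι] [DecidableEq ι] [CommRing R]
    (M : Matrix ι ι R) (i j : ι) : (M * Mᵀ)⁻¹ i j = ∑ k, M⁻¹ k i * M⁻¹ k j := by
  rw [mul_inv_rev, ← transpose_nonsing_inv, mul_apply]
  simp only [transpose_apply]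

theorem inv_mul_transpose_self_zero_zero {K : Type*} [Field K] {m : ℕ}
    {M : Matrix (Fin (m + 2)) (Fin (m + 2)) K} (hrow : ∀ j : Fin (m + 1), M 0 j.succ = 0)
    (hcol : ∀ i : Fin m, M i.succ.succ 0 = 0) (hM : IsUnit M.det) :
    (M * Mᵀ)⁻¹ 0 0 = (M 0 0 ^ 2)⁻¹ * (1 + M 1 0 ^ 2 *
      (M.submatrix Fin.succ Fin.succ * (M.submatrix Fin.succ Fin.succ)ᵀ)⁻¹ 0 0) := by
  have hcol' : (fun i : Fin (m + 1) ↦ M i.succ 0) = Pi.single 0 (M 1 0) := by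
    funext i
    refine Fin.cases ?_ (fun i ↦ ?_) i
    · rfl
    · simp [hcol]
  have hinv := inv_col_zero_of_row_zero hrow hM
  rw [hcol', mulVec_single] at hinv
  have h0 : M⁻¹ 0 0 = (M 0 0)⁻¹ := congrFun hinv 0
  have hsucc (k : Fin (m + 1)) :
      M⁻¹ k.succ 0 = -(M 0 0)⁻¹ * ((M.submatrix Fin.succ Fin.succ)⁻¹ k 0 * M 1 0) :=
    congrFun hinv k.succ
  rw [inv_mul_transpose_self_apply, inv_mul_transpose_self_apply, Fin.sum_univ_succ, h0,
    mul_add, Finset.mul_sum, Finset.mul_sum]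
  simp only [hsucc]
  congr 1
  · ring
  · exact Finset.sum_congr rfl fun k _ ↦ by ring

end Matrix

/-- For `N = n + 2 ≥ 2` and a real lower bidiagonal `N × N` matrix `H` with
nonzero diagonal entries `α i` and subdiagonal entries `β j`, with `T = H * Hᵀ`, and `Ht`
the matrix obtained by deleting the first row and column of `H`, `Tt = Ht * Htᵀ`, both
`T` and `Tt` are invertible, and
`(T⁻¹) 0 0 = (α 0 ^ 2)⁻¹ * (1 + β 0 ^ 2 * (Tt⁻¹) 0 0)`. -/
theorem stmt_8 (n : ℕ) (α β : ℕ → ℝ)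
    (hα : ∀ i, i < n + 2 → α i ≠ 0)
    (H : Matrix (Fin (n + 2)) (Fin (n + 2)) ℝ)
    (hH : ∀ i j : Fin (n + 2), H i j =
      if (i : ℕ) = (j : ℕ) then α i
      else if (i : ℕ) = (j : ℕ) + 1 then β j else 0)
    (T : Matrix (Fin (n + 2)) (Fin (n + 2)) ℝ) (hT : T = H * Hᵀ)
    (Ht : Matrix (Fin (n + 1)) (Fin (n + 1)) ℝ)
    (hHt : Ht = H.submatrix Fin.succ Fin.succ)
    (Tt : Matrix (Fin (n + 1)) (Fin (n + 1)) ℝ) (hTt : Tt = Ht * Htᵀ) :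
    IsUnit T.det ∧ IsUnit Tt.det ∧
    T⁻¹ 0 0 = (α 0 ^ 2)⁻¹ * (1 + β 0 ^ 2 * Tt⁻¹ 0 0) := by
  subst hT hTt hHt
  have hrow (j : Fin (n + 1)) : H 0 j.succ = 0 := by simp [hH]
  have hcol (i : Fin n) : H i.succ.succ 0 = 0 := by simp [hH]
  have hlower : H.IsLowerTriangular := fun i j hij ↦ by
    have : (i : ℕ) < j := hij
    rw [hH, if_neg (by omega), if_neg (by omega)]
  have hH_det : IsUnit H.det := by
    rw [det_of_isLowerTriangular H hlower]
    refine (Finset.prod_ne_zero_iff.mpr fun i _ ↦ ?_).isUnit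
    simpa [hH] using hα i i.isLt
  refine ⟨isUnit_det_mul_transpose_self hH_det,
    isUnit_det_mul_transpose_self (isUnit_det_submatrix_succ_of_row_zero hrow hH_det), ?_⟩
  rw [inv_mul_transpose_self_zero_zero hrow hcol hH_det]
  simp [hH]
end

section
/- Let N ≥ 1 and let H be an N×N real lower bidiagonal matrix with nonzero diagonal entries α_0,…,α_{N−1} and subdiagonal entries β_0,…,β_{N−2}; set T = HHᵀ. Then T is invertible and (T⁻¹)_{11} = α_0⁻²(1 + Σ_{j=1}^{N−1} ∏_{k=1}^{j} β_{k−1}²/α_k²). -/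
/-!
Since `T⁻¹ = H⁻ᵀ H⁻¹`, the entry `(T⁻¹)₀₀` is the squared length of the first column `x` of
`H⁻¹`. That column solves `H x = e₀`, and forward substitution along the bidiagonal gives
`x_k = α₀⁻¹ ∏_{i=1}^{k} (-β_{i-1} / α_i)`.
-/

open Matrix Finset

theorem Fin.sum_univ_eq_add_sum_Icc {M : Type*} [AddCommMonoid M] (n : ℕ) (f : ℕ → M) :
    ∑ k : Fin (n + 1), f k = f 0 + ∑ j ∈ Icc 1 n, f j := by
  rw [Fin.sum_univ_eq_sum_range f, range_eq_Ico, sum_eq_sum_Ico_succ_bot n.succ_pos,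
    zero_add, Nat.succ_eq_add_one, Ico_add_one_right_eq_Icc]

namespace Matrix

section Inverse

variable {m R : Type*} [Fintype m] [DecidableEq m] [CommRing R]

theorem inv_apply_eq_of_mulVec_eq_single {A : Matrix m m R} (hA : IsUnit A.det) {x : m → R}
    {j : m} (h : A *ᵥ x = Pi.single j 1) (k : m) : A⁻¹ k j = x k := by
  have : A⁻¹ *ᵥ (A *ᵥ x) = x := by rw [mulVec_mulVec, nonsing_inv_mul A hA, one_mulVec]
  rw [← this, h, mulVec_single_one]
  rfl

theorem inv_mul_transpose_apply (A : Matrix m m R) (i j : m) :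
    (A * Aᵀ)⁻¹ i j = ∑ k, A⁻¹ k i * A⁻¹ k j := by
  rw [mul_inv_rev, ← transpose_nonsing_inv, mul_apply]
  rfl

end Inverse

section LowerBidiagonal

variable {K : Type*} [Field K]

def lowerBidiagonal (n : ℕ) (α β : ℕ → K) : Matrix (Fin (n + 1)) (Fin (n + 1)) K :=
  of fun i j => if (i : ℕ) = j then α i else if (i : ℕ) = j + 1 then β j else 0

variable {n : ℕ} {α β : ℕ → K}

theorem lowerBidiagonal_apply (i j : Fin (n + 1)) :
    lowerBidiagonal n α β i j =
      if (i : ℕ) = j then α i else if (i : ℕ) = j + 1 then β j else 0 :=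
  rfl

theorem isLowerTriangular_lowerBidiagonal : (lowerBidiagonal n α β).IsLowerTriangular := by
  intro i j hij
  have hij : (i : ℕ) < j := hij
  rw [lowerBidiagonal_apply, if_neg hij.ne, if_neg (by omega)]

theorem det_lowerBidiagonal : (lowerBidiagonal n α β).det = ∏ i : Fin (n + 1), α i := by
  simp [det_of_isLowerTriangular _ isLowerTriangular_lowerBidiagonal, lowerBidiagonal_apply]

theorem isUnit_det_lowerBidiagonal (hα : ∀ i < n + 1, α i ≠ 0) :
    IsUnit (lowerBidiagonal n α β).det := by
  rw [det_lowerBidiagonal]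
  exact IsUnit.mk0 _ (prod_ne_zero_iff.mpr fun i _ => hα i i.is_lt)

theorem lowerBidiagonal_mulVec_zero (x : Fin (n + 1) → K) :
    (lowerBidiagonal n α β *ᵥ x) 0 = α 0 * x 0 := by
  rw [mulVec, dotProduct, sum_eq_single 0]
  · simp [lowerBidiagonal_apply]
  · intro j _ hj
    rw [lowerBidiagonal_apply, if_neg (Fin.val_ne_of_ne hj).symm, if_neg (by simp), zero_mul]
  · simp

theorem lowerBidiagonal_mulVec_succ (x : Fin (n + 1) → K) (i : Fin n) :
    (lowerBidiagonal n α β *ᵥ x) i.succ = β i * x i.castSucc + α (i + 1) * x i.succ := by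
  rw [mulVec, dotProduct, sum_eq_add i.castSucc i.succ (Fin.castSucc_lt_succ (i := i)).ne]
  · simp [lowerBidiagonal_apply]
  · rintro j - ⟨hj₁, hj₂⟩
    have h₁ : (i : ℕ) ≠ j := fun h => hj₁ (Fin.ext h.symm)
    have h₂ : (i : ℕ) + 1 ≠ j := fun h => hj₂ (Fin.ext (by simpa using h.symm))
    simp [lowerBidiagonal_apply, h₁, h₂]
  all_goals simp

theorem lowerBidiagonal_mulVec_eq_single (hα : ∀ i < n + 1, α i ≠ 0) :
    lowerBidiagonal n α β *ᵥ
        (fun k : Fin (n + 1) => (α 0)⁻¹ * ∏ i ∈ Icc 1 (k : ℕ), (-β (i - 1) / α i)) =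
      Pi.single 0 1 := by
  funext k
  induction k using Fin.cases with
  | zero => simp [lowerBidiagonal_mulVec_zero, hα 0 n.succ_pos]
  | succ i =>
    rw [lowerBidiagonal_mulVec_succ, Pi.single_eq_of_ne (Fin.succ_ne_zero i)]
    simp only [Fin.val_succ, Fin.val_castSucc, prod_Icc_succ_top (Nat.le_add_left 1 i),
      Nat.add_sub_cancel]
    field_simp [hα (i + 1) (by omega)]
    ring

theorem inv_lowerBidiagonal_apply_zero (hα : ∀ i < n + 1, α i ≠ 0) (k : Fin (n + 1)) :
    (lowerBidiagonal n α β)⁻¹ k 0 = (α 0)⁻¹ * ∏ i ∈ Icc 1 (k : ℕ), (-β (i - 1) / α i) :=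
  inv_apply_eq_of_mulVec_eq_single (isUnit_det_lowerBidiagonal hα)
    (lowerBidiagonal_mulVec_eq_single hα) k

end LowerBidiagonal

end Matrix

/-- For `N = n + 1 ≥ 1` and a real lower bidiagonal `N × N` matrix `H` with
nonzero diagonal entries `α i` and subdiagonal entries `β j`, with `T = H * Hᵀ`, the matrix
`T` is invertible and
`(T⁻¹) 0 0 = (α 0 ^ 2)⁻¹ * (1 + ∑_{j=1}^{N-1} ∏_{i=1}^{j} β_{i-1}² / α_i²)`. -/
theorem stmt_9 (n : ℕ) (α β : ℕ → ℝ)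
    (hα : ∀ i, i < n + 1 → α i ≠ 0)
    (H : Matrix (Fin (n + 1)) (Fin (n + 1)) ℝ)
    (hH : ∀ i j : Fin (n + 1), H i j =
      if (i : ℕ) = (j : ℕ) then α i
      else if (i : ℕ) = (j : ℕ) + 1 then β j else 0)
    (T : Matrix (Fin (n + 1)) (Fin (n + 1)) ℝ) (hT : T = H * Hᵀ) :
    IsUnit T.det ∧
    T⁻¹ 0 0 = (α 0 ^ 2)⁻¹ *
      (1 + ∑ j ∈ Finset.Icc 1 n, ∏ i ∈ Finset.Icc 1 j, β (i - 1) ^ 2 / α i ^ 2) := by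
  have hdet : IsUnit (lowerBidiagonal n α β).det := isUnit_det_lowerBidiagonal hα
  rw [hT, show H = lowerBidiagonal n α β from Matrix.ext hH]
  refine ⟨by simpa [det_mul] using hdet.mul hdet, ?_⟩
  simp_rw [inv_mul_transpose_apply, inv_lowerBidiagonal_apply_zero hα, ← sq, mul_pow, inv_pow,
    ← prod_pow, div_pow, neg_sq, ← mul_sum]
  rw [Fin.sum_univ_eq_add_sum_Icc n (fun k => ∏ i ∈ Icc 1 k, β (i - 1) ^ 2 / α i ^ 2)]
  simp
end

section
/- Let X ∈ ℂ^{N×M} and let z ∈ ℂ with Im z ≠ 0. Then the (M+N)×(M+N) block matrix B = [[−I_M, X*],[X, −zI_N]] is invertible, its inverse is given in block form by B⁻¹ = [[(z⁻¹X*X − I_M)⁻¹, (X*X − zI_M)⁻¹X*],[X(X*X − zI_M)⁻¹, (XX* − zI_N)⁻¹]], and its operator norm satisfies ‖B⁻¹‖ ≤ (|z| + 1)|Im z|⁻¹ + 2√(|Im z|⁻¹ + |z| |Im z|⁻²). -/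
/-!
For Hermitian `H`, `Im ⟪v, (H - z) v⟫ = -Im z ‖v‖²`, so `H - z` is bounded below by `|Im z|`;
hence it is invertible with `‖(H - z)⁻¹‖ ≤ |Im z|⁻¹`. Multiplying out, using the push-through
identity `(XᴴX - z)⁻¹ Xᴴ = Xᴴ (XXᴴ - z)⁻¹`, confirms the block inverse. For `R = (XᴴX - z)⁻¹` the
C*-identity gives `‖XR‖² = ‖Rᴴ XᴴX R‖ = ‖Rᴴ + z RᴴR‖ ≤ |Im z|⁻¹ + |z| |Im z|⁻²`, the same bound
holds for `R Xᴴ = Xᴴ (XXᴴ - z)⁻¹`, and the norm of a block matrix is at most the sum of the norms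
of its blocks.
-/

open Matrix

open scoped Matrix.Norms.L2Operator InnerProductSpace

theorem LinearMap.IsSymmetric.abs_im_mul_norm_le_norm_sub_smul {E : Type*}
    [NormedAddCommGroup E] [InnerProductSpace ℂ E] {T : E →ₗ[ℂ] E} (hT : T.IsSymmetric)
    (z : ℂ) (v : E) :
    |z.im| * ‖v‖ ≤ ‖T v - z • v‖ := by
  rcases (norm_nonneg v).eq_or_lt with hv | hv
  · simp [← hv]
  have him : (⟪v, T v - z • v⟫_ℂ).im = -(z.im * ‖v‖ ^ 2) := by
    have hreal : (⟪v, T v⟫_ℂ).im = 0 := hT.im_inner_self_apply v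
    rw [inner_sub_right, inner_smul_right, inner_self_eq_norm_sq_to_K, Complex.sub_im, hreal]
    simp [Complex.mul_im, ← Complex.ofReal_pow]
  refine le_of_mul_le_mul_right ?_ hv
  calc |z.im| * ‖v‖ * ‖v‖ = |(⟪v, T v - z • v⟫_ℂ).im| := by
        rw [him, abs_neg, abs_mul, abs_of_nonneg (sq_nonneg ‖v‖)]; ring
    _ ≤ ‖⟪v, T v - z • v⟫_ℂ‖ := Complex.abs_im_le_norm _
    _ ≤ ‖v‖ * ‖T v - z • v‖ := norm_inner_le_norm _ _
    _ = ‖T v - z • v‖ * ‖v‖ := mul_comm _ _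

namespace Matrix

section LowerBound

variable {𝕜 n : Type*} [RCLike 𝕜] [Fintype n] [DecidableEq n] {A : Matrix n n 𝕜} {c : ℝ}

theorem isUnit_det_of_bounded_below (hc : 0 < c)
    (h : ∀ v, c * ‖v‖ ≤ ‖toEuclideanCLM (𝕜 := 𝕜) A v‖) : IsUnit A.det := by
  rw [isUnit_iff_ne_zero]
  intro hdet
  obtain ⟨w, hw0, hw⟩ := exists_mulVec_eq_zero_iff.mpr hdet
  have hv := h (WithLp.toLp 2 w)
  rw [toEuclideanCLM_toLp, hw, WithLp.toLp_zero, norm_zero] at hv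
  have : 0 < ‖WithLp.toLp 2 w‖ := norm_pos_iff.mpr (by simpa using hw0)
  nlinarith

theorem l2_opNorm_inv_le_of_bounded_below (hc : 0 < c)
    (h : ∀ v, c * ‖v‖ ≤ ‖toEuclideanCLM (𝕜 := 𝕜) A v‖) : ‖A⁻¹‖ ≤ c⁻¹ := by
  rw [cstar_norm_def]
  refine ContinuousLinearMap.opNorm_le_bound _ (by positivity) fun v => ?_
  have hAA : toEuclideanCLM (𝕜 := 𝕜) A (toEuclideanCLM (𝕜 := 𝕜) A⁻¹ v) = v := by
    rw [← mul_apply_eq_comp, ← map_mul,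
      mul_nonsing_inv _ (isUnit_det_of_bounded_below hc h), map_one, one_apply_eq_self]
  rw [inv_mul_eq_div, le_div_iff₀' hc]
  simpa [hAA] using h (toEuclideanCLM (𝕜 := 𝕜) A⁻¹ v)

end LowerBound

section Resolvent

variable {n : Type*} [Fintype n] [DecidableEq n] {H : Matrix n n ℂ} {z : ℂ}

theorem IsHermitian.abs_im_mul_norm_le_toEuclideanCLM_sub_smul_one (hH : H.IsHermitian) (z : ℂ)
    (v : EuclideanSpace ℂ n) :
    |z.im| * ‖v‖ ≤ ‖toEuclideanCLM (𝕜 := ℂ) (H - z • 1) v‖ := by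
  simpa [map_sub, map_smul, ← coe_toEuclideanCLM_eq_toEuclideanLin] using
    (isSymmetric_toEuclideanLin_iff.mpr hH).abs_im_mul_norm_le_norm_sub_smul z v

theorem IsHermitian.isUnit_det_sub_smul_one (hH : H.IsHermitian) (hz : z.im ≠ 0) :
    IsUnit (H - z • 1).det :=
  isUnit_det_of_bounded_below (abs_pos.mpr hz)
    (hH.abs_im_mul_norm_le_toEuclideanCLM_sub_smul_one z)

theorem IsHermitian.l2_opNorm_inv_sub_smul_one_le (hH : H.IsHermitian) (hz : z.im ≠ 0) :
    ‖(H - z • 1)⁻¹‖ ≤ |z.im|⁻¹ :=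
  l2_opNorm_inv_le_of_bounded_below (abs_pos.mpr hz)
    (hH.abs_im_mul_norm_le_toEuclideanCLM_sub_smul_one z)

end Resolvent

section BlockNorm

variable {𝕜 k l m n : Type*} [RCLike 𝕜] [Fintype k] [Fintype l] [Fintype m] [Fintype n]

theorem l2_opNorm_le_one_of_conjTranspose_mul_self_eq_one [DecidableEq n] {E : Matrix m n 𝕜}
    (hE : Eᴴ * E = 1) : ‖E‖ ≤ 1 := by
  have hone : ‖(1 : Matrix n n 𝕜)‖ ≤ 1 := by
    rw [cstar_norm_def, map_one]
    exact ContinuousLinearMap.norm_id_le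
  have hsq : ‖E‖ * ‖E‖ ≤ 1 := by rwa [← l2_opNorm_conjTranspose_mul_self, hE]
  nlinarith [norm_nonneg E]

theorem l2_opNorm_mul_mul_conjTranspose_le [DecidableEq m] [DecidableEq n] [DecidableEq l]
    {P : Matrix k m 𝕜} {R : Matrix l n 𝕜} (hP : ‖P‖ ≤ 1) (hR : ‖R‖ ≤ 1) (Q : Matrix m n 𝕜) :
    ‖P * Q * Rᴴ‖ ≤ ‖Q‖ :=
  calc ‖P * Q * Rᴴ‖ ≤ ‖P‖ * ‖Q‖ * ‖Rᴴ‖ :=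
        (l2_opNorm_mul _ _).trans (by gcongr; exact l2_opNorm_mul _ _)
    _ ≤ 1 * ‖Q‖ * 1 := by rw [l2_opNorm_conjTranspose]; gcongr
    _ = ‖Q‖ := by ring

theorem l2_opNorm_fromBlocks_le [DecidableEq m] [DecidableEq n] (A : Matrix m m 𝕜)
    (B : Matrix m n 𝕜) (C : Matrix n m 𝕜) (D : Matrix n n 𝕜) :
    ‖fromBlocks A B C D‖ ≤ ‖A‖ + ‖B‖ + ‖C‖ + ‖D‖ := by
  set ι₁ : Matrix (m ⊕ n) m 𝕜 := fromRows 1 0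
  set ι₂ : Matrix (m ⊕ n) n 𝕜 := fromRows 0 1
  have h₁ : ‖ι₁‖ ≤ 1 := l2_opNorm_le_one_of_conjTranspose_mul_self_eq_one <| by
    simp [ι₁, conjTranspose_fromRows_eq_fromCols_conjTranspose, fromCols_mul_fromRows]
  have h₂ : ‖ι₂‖ ≤ 1 := l2_opNorm_le_one_of_conjTranspose_mul_self_eq_one <| by
    simp [ι₂, conjTranspose_fromRows_eq_fromCols_conjTranspose, fromCols_mul_fromRows]
  have hsplit : fromBlocks A B C D =
      ι₁ * A * ι₁ᴴ + ι₁ * B * ι₂ᴴ + ι₂ * C * ι₁ᴴ + ι₂ * D * ι₂ᴴ := by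
    ext (i | i) (j | j) <;>
      simp [ι₁, ι₂, conjTranspose_fromRows_eq_fromCols_conjTranspose, fromRows_mul]
  rw [hsplit]
  refine (norm_add₄_le ..).trans ?_
  gcongr <;> exact l2_opNorm_mul_mul_conjTranspose_le ‹_› ‹_› _

end BlockNorm

section BlockInverse

variable {R K m n : Type*} [CommRing R] [Field K] [Fintype m] [Fintype n] [DecidableEq m]
  [DecidableEq n]

theorem inv_mul_sub_smul_one_mul_comm {A : Matrix m n R} {B : Matrix n m R} {z : R}
    (hAB : IsUnit (A * B - z • 1).det) (hBA : IsUnit (B * A - z • 1).det) :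
    (A * B - z • 1)⁻¹ * A = A * (B * A - z • 1)⁻¹ := by
  have hcomm : (A * B - z • 1) * A = A * (B * A - z • 1) := by
    simp only [Matrix.sub_mul, Matrix.mul_sub, Matrix.smul_mul, Matrix.mul_smul, Matrix.one_mul,
      Matrix.mul_one, Matrix.mul_assoc]
  calc (A * B - z • 1)⁻¹ * A
      = (A * B - z • 1)⁻¹ * A * ((B * A - z • 1) * (B * A - z • 1)⁻¹) := by
        rw [mul_nonsing_inv _ hBA, Matrix.mul_one]
    _ = (A * B - z • 1)⁻¹ * ((A * B - z • 1) * A) * (B * A - z • 1)⁻¹ := by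
        rw [hcomm]; simp only [Matrix.mul_assoc]
    _ = A * (B * A - z • 1)⁻¹ := by rw [nonsing_inv_mul_cancel_left _ _ hAB]

theorem fromBlocks_neg_one_mul_fromBlocks_resolvent (X : Matrix n m R) (Y : Matrix m n R) (z : R)
    (hYX : IsUnit (Y * X - z • 1).det) (hXY : IsUnit (X * Y - z • 1).det) :
    fromBlocks (-1) Y X (-(z • 1)) *
      fromBlocks (z • (Y * X - z • 1)⁻¹) ((Y * X - z • 1)⁻¹ * Y) (X * (Y * X - z • 1)⁻¹)
        (X * Y - z • 1)⁻¹ = 1 := by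
  set P := (Y * X - z • 1)⁻¹
  set Q := (X * Y - z • 1)⁻¹
  have hP : Y * X * P = 1 + z • P := by
    have h := mul_nonsing_inv _ hYX
    rwa [Matrix.sub_mul, Matrix.smul_mul, Matrix.one_mul, sub_eq_iff_eq_add] at h
  have hQ : X * Y * Q = 1 + z • Q := by
    have h := mul_nonsing_inv _ hXY
    rwa [Matrix.sub_mul, Matrix.smul_mul, Matrix.one_mul, sub_eq_iff_eq_add] at h
  have hpush : P * Y = Y * Q := inv_mul_sub_smul_one_mul_comm hYX hXY
  rw [fromBlocks_multiply, ← fromBlocks_one]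
  congr 1
  · rw [Matrix.neg_mul, Matrix.one_mul, ← Matrix.mul_assoc, hP]; abel
  · rw [Matrix.neg_mul, Matrix.one_mul, hpush]; abel
  · rw [Matrix.mul_smul, Matrix.neg_mul, Matrix.smul_mul, Matrix.one_mul]; abel
  · rw [← Matrix.mul_assoc, Matrix.mul_assoc X, hpush, ← Matrix.mul_assoc, hQ, Matrix.neg_mul,
      Matrix.smul_mul, Matrix.one_mul]; abel

theorem inv_inv_smul_sub_one {H : Matrix n n K} {z : K} (hz : z ≠ 0)
    (hH : IsUnit (H - z • 1).det) : (z⁻¹ • H - 1)⁻¹ = z • (H - z • 1)⁻¹ := by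
  have hscale : z⁻¹ • H - 1 = z⁻¹ • (H - z • 1) := by
    rw [smul_sub, smul_smul, inv_mul_cancel₀ hz, one_smul]
  refine inv_eq_right_inv ?_
  rw [hscale, smul_mul_smul_comm, inv_mul_cancel₀ hz, one_smul, mul_nonsing_inv _ hH]

end BlockInverse

theorem l2_opNorm_mul_inv_gram_sub_smul_one_le {m n : Type*} [Fintype m] [Fintype n]
    [DecidableEq n] (X : Matrix m n ℂ) {z : ℂ} (hz : z.im ≠ 0) :
    ‖X * (Xᴴ * X - z • 1)⁻¹‖ ≤ √(|z.im|⁻¹ + ‖z‖ * |z.im|⁻¹ ^ 2) := by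
  set P := (Xᴴ * X - z • 1)⁻¹
  have hgram := isHermitian_conjTranspose_mul_self X
  have hP : ‖P‖ ≤ |z.im|⁻¹ := hgram.l2_opNorm_inv_sub_smul_one_le hz
  have hid : (X * P)ᴴ * (X * P) = Pᴴ + z • (Pᴴ * P) := by
    have h := mul_nonsing_inv _ (hgram.isUnit_det_sub_smul_one hz)
    rw [Matrix.sub_mul, Matrix.smul_mul, Matrix.one_mul, sub_eq_iff_eq_add] at h
    rw [conjTranspose_mul, Matrix.mul_assoc, ← Matrix.mul_assoc Xᴴ, h, Matrix.mul_add,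
      Matrix.mul_one, Matrix.mul_smul]
  apply Real.le_sqrt_of_sq_le
  calc ‖X * P‖ ^ 2 = ‖Pᴴ + z • (Pᴴ * P)‖ := by
        rw [sq, ← l2_opNorm_conjTranspose_mul_self, hid]
    _ ≤ ‖P‖ + ‖z‖ * (‖P‖ * ‖P‖) := by
        grw [norm_add_le, norm_smul, l2_opNorm_mul, l2_opNorm_conjTranspose]
    _ ≤ |z.im|⁻¹ + ‖z‖ * |z.im|⁻¹ ^ 2 := by
        rw [sq]; gcongr

end Matrix

/-- For `X ∈ ℂ^{N×M}` and `z ∈ ℂ` with `Im z ≠ 0`, the block matrix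
`B = [[-I_M, Xᴴ], [X, -z I_N]]` is invertible, with inverse given in block form by
`[[(z⁻¹ XᴴX - I)⁻¹, (XᴴX - z I)⁻¹ Xᴴ], [X (XᴴX - z I)⁻¹, (XXᴴ - z I)⁻¹]]`, and its
`ℓ²`-operator norm is at most `(|z| + 1)|Im z|⁻¹ + 2 √(|Im z|⁻¹ + |z| |Im z|⁻²)`. -/
theorem stmt_10 (N M : ℕ) (X : Matrix (Fin N) (Fin M) ℂ) (z : ℂ) (hz : z.im ≠ 0)
    (B : Matrix (Fin M ⊕ Fin N) (Fin M ⊕ Fin N) ℂ)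
    (hB : B = Matrix.fromBlocks (-1) Xᴴ X (-(z • 1))) :
    IsUnit B.det ∧
    B⁻¹ = Matrix.fromBlocks
      ((z⁻¹ • (Xᴴ * X) - 1)⁻¹)
      ((Xᴴ * X - z • 1)⁻¹ * Xᴴ)
      (X * (Xᴴ * X - z • 1)⁻¹)
      ((X * Xᴴ - z • 1)⁻¹) ∧
    ‖Matrix.toEuclideanCLM (𝕜 := ℂ) B⁻¹‖ ≤
      (‖z‖ + 1) * |z.im|⁻¹ +
        2 * Real.sqrt (|z.im|⁻¹ + ‖z‖ * |z.im|⁻¹ ^ 2) := by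
  subst hB
  have hXhX := isHermitian_conjTranspose_mul_self X
  have hXXh := isHermitian_mul_conjTranspose_self X
  have hright := fromBlocks_neg_one_mul_fromBlocks_resolvent X Xᴴ z
    (hXhX.isUnit_det_sub_smul_one hz) (hXXh.isUnit_det_sub_smul_one hz)
  have hinv := inv_eq_right_inv hright
  have hz₀ : z ≠ 0 := fun h => hz (by simp [h])
  refine ⟨isUnit_det_of_right_inverse hright, ?_, ?_⟩
  · rw [hinv, inv_inv_smul_sub_one hz₀ (hXhX.isUnit_det_sub_smul_one hz)]
  · rw [← cstar_norm_def, hinv]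
    have h₁₁ : ‖z • (Xᴴ * X - z • 1)⁻¹‖ ≤ ‖z‖ * |z.im|⁻¹ := by
      grw [norm_smul, hXhX.l2_opNorm_inv_sub_smul_one_le hz]
    have h₁₂ : ‖(Xᴴ * X - z • 1)⁻¹ * Xᴴ‖ ≤ √(|z.im|⁻¹ + ‖z‖ * |z.im|⁻¹ ^ 2) := by
      rw [inv_mul_sub_smul_one_mul_comm (hXhX.isUnit_det_sub_smul_one hz)
        (hXXh.isUnit_det_sub_smul_one hz)]
      simpa using l2_opNorm_mul_inv_gram_sub_smul_one_le Xᴴ hz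
    have h₂₁ := l2_opNorm_mul_inv_gram_sub_smul_one_le X hz
    have h₂₂ := hXXh.l2_opNorm_inv_sub_smul_one_le hz
    grw [l2_opNorm_fromBlocks_le, h₁₁, h₁₂, h₂₁, h₂₂]
    linarith
end

section
/- Let W ∈ ℂ^{N×N} be Hermitian positive definite and b ∈ ℂ^N a unit vector, and let T be an n×n Jacobi matrix (n ≤ N) with (T^m)_{11} = b*W^m b for all integers m ≥ 0 (the Lanczos tridiagonalization of (W,b)). Let T = HHᵀ be its Cholesky factorization with H lower bidiagonal with positive diagonal entries α_0,…,α_{n−1} and subdiagonal entries β_0,…,β_{n−2}. For 1 ≤ k < n, let x_k be the minimizer of ‖W⁻¹b − y‖_W over the Krylov subspace K_k, with residual r_k = b − Wx_k and error e_k = W⁻¹b − x_k. Let L_k be the trailing (n−k)×(n−k) principal submatrix of H (rows and columns k+1 through n). Then ‖e_k‖_W = ‖r_k‖₂ · √(((L_k L_kᵀ)⁻¹)_{11}). -/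
/-!
The moments `b* W^s b` coincide with `(T^s)₁₁`, so the Gram matrices of the Krylov bases of
`(W, b)` and `(T, e₁)` agree, and `Q = K_W K_T⁻¹` is the Lanczos basis: `Qᴴ Q = 1`, `W Q = Q T`,
`Q e₁ = b`. Through `Q` the conjugate gradient problem for `(W, b)` becomes the same problem for
`(T, e₁)`, whose Krylov spaces are coordinate subspaces because `T` is an unreduced Hessenberg
matrix. The Galerkin condition then forces the transported residual `T u` to be a multiple
`ρ e_{k+1}` of a unit vector, so that `‖r_k‖ = |ρ|` and `‖e_k‖²_W = uᴴ T u = |ρ|² (T⁻¹)_{k+1,k+1}`.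
Finally, `H` being lower triangular, the `(k+1)`-st column of `H⁻¹` is the first column of `L_k⁻¹`
padded with zeros, whence `(T⁻¹)_{k+1,k+1} = ((L_k L_kᵀ)⁻¹)₁₁`.
-/

open Matrix
open scoped ComplexOrder

namespace Lanczos

section Hessenberg

variable {R : Type*} {m : ℕ}

def IsHessenberg [Zero R] (A : Matrix (Fin m) (Fin m) R) : Prop :=
  ∀ i j : Fin m, (j : ℕ) + 1 < i → A i j = 0

theorem IsHessenberg.map [Zero R] {S : Type*} [Zero S] {A : Matrix (Fin m) (Fin m) R}
    (hA : IsHessenberg A) {f : R → S} (hf : f 0 = 0) : IsHessenberg (A.map f) :=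
  fun i j hij => by rw [map_apply, hA i j hij, hf]

theorem IsHessenberg.mulVec_apply_eq_zero [NonUnitalNonAssocSemiring R]
    {A : Matrix (Fin m) (Fin m) R} (hA : IsHessenberg A) {v : Fin m → R} {k : ℕ}
    (hv : ∀ l : Fin m, k ≤ l → v l = 0) {j : Fin m} (hj : k < j) : (A *ᵥ v) j = 0 :=
  Finset.sum_eq_zero (s := Finset.univ) fun l _ => show A j l * v l = 0 by
    rcases lt_or_ge ((l : ℕ) + 1) j with h | h
    · rw [hA j l h, zero_mul]
    · rw [hv l (by omega), mul_zero]

variable [Semiring R] {A : Matrix (Fin (m + 1)) (Fin (m + 1)) R}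

theorem IsHessenberg.pow_mulVec_single_apply_eq_zero (hA : IsHessenberg A) {i : ℕ}
    {j : Fin (m + 1)} (hij : i < j) : (A ^ i *ᵥ Pi.single 0 1) j = 0 := by
  induction i generalizing j with
  | zero =>
    rw [pow_zero, one_mulVec]
    exact Pi.single_eq_of_ne (Fin.pos_iff_ne_zero.mp hij) _
  | succ i ih =>
    rw [pow_succ', ← mulVec_mulVec]
    exact hA.mulVec_apply_eq_zero (fun l hl => ih (by omega)) hij

theorem IsHessenberg.pow_mulVec_single_apply_self_ne_zero [NoZeroDivisors R] [Nontrivial R]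
    (hA : IsHessenberg A) (hsub : ∀ i j : Fin (m + 1), (j : ℕ) + 1 = i → A i j ≠ 0) {i : ℕ}
    (hi : i < m + 1) : (A ^ i *ᵥ Pi.single 0 1) ⟨i, hi⟩ ≠ 0 := by
  induction i with
  | zero => simp
  | succ i ih =>
    rw [pow_succ', ← mulVec_mulVec, mulVec, dotProduct,
      Finset.sum_eq_single (⟨i, by omega⟩ : Fin (m + 1))]
    · exact mul_ne_zero (hsub _ _ rfl) (ih _)
    · intro l _ hl
      rcases lt_or_gt_of_ne hl with h | h
      · rw [hA _ l (by rw [Fin.lt_def] at h; simp only at h ⊢; omega), zero_mul]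
      · rw [hA.pow_mulVec_single_apply_eq_zero h, mul_zero]
    · simp

theorem IsHessenberg.apply_eq_zero_of_mem_span (hA : IsHessenberg A) {k : ℕ} {v : Fin (m + 1) → R}
    (hv : v ∈ Submodule.span R (Set.range fun i : Fin k => A ^ (i : ℕ) *ᵥ Pi.single 0 1))
    (j : Fin (m + 1)) (hj : k ≤ j) : v j = 0 := by
  induction hv using Submodule.span_induction with
  | mem w hw =>
    obtain ⟨i, rfl⟩ := hw
    exact hA.pow_mulVec_single_apply_eq_zero (by omega)
  | zero => rfl
  | add w w' _ _ hw hw' => simp [hw, hw']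
  | smul c w _ hw => simp [hw]

theorem IsHessenberg.apply_eq_zero_of_dotProduct_eq_zero [NoZeroDivisors R] [Nontrivial R]
    (hA : IsHessenberg A)
    (hsub : ∀ i j : Fin (m + 1), (j : ℕ) + 1 = i → A i j ≠ 0) {k : ℕ} {r : Fin (m + 1) → R}
    (hr : ∀ i < k, r ⬝ᵥ A ^ i *ᵥ Pi.single 0 1 = 0) (j : Fin (m + 1)) (hj : (j : ℕ) < k) :
    r j = 0 := by
  induction j using WellFoundedLT.induction with
  | ind j ih =>
    have h := hr j hj
    rw [dotProduct, Finset.sum_eq_single j] at h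
    · exact (mul_eq_zero.mp h).resolve_right (hA.pow_mulVec_single_apply_self_ne_zero hsub j.isLt)
    · intro l _ hl
      rcases lt_or_gt_of_ne hl with h | h
      · rw [ih l h (by omega), zero_mul]
      · rw [hA.pow_mulVec_single_apply_eq_zero h, mul_zero]
    · simp

theorem IsHessenberg.eq_single_of_add_mulVec_eq_single (hA : IsHessenberg A) {k : ℕ}
    (hk : k < m + 1) {r y : Fin (m + 1) → R} (hy : ∀ l : Fin (m + 1), k ≤ l → y l = 0)
    (hr : r + A *ᵥ y = Pi.single 0 1) (hlow : ∀ j : Fin (m + 1), (j : ℕ) < k → r j = 0) :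
    r = Pi.single ⟨k, hk⟩ (r ⟨k, hk⟩) := by
  funext j
  rcases lt_trichotomy (j : ℕ) k with h | h | h
  · rw [hlow j h, Pi.single_eq_of_ne (Fin.ne_of_val_ne h.ne)]
  · obtain rfl : j = ⟨k, hk⟩ := Fin.ext h
    rw [Pi.single_eq_same]
  · have hj := congrFun hr j
    rw [Pi.add_apply, hA.mulVec_apply_eq_zero hy h, add_zero,
      Pi.single_eq_of_ne (by rintro rfl; simp at h)] at hj
    rw [hj, Pi.single_eq_of_ne (Fin.ne_of_val_ne (by simp only; omega))]

end Hessenberg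

section Krylov

variable {R : Type*} {n : Type*} [Fintype n] [DecidableEq n]

def krylovMatrix [Semiring R] (A : Matrix n n R) (v : n → R) (m : ℕ) : Matrix n (Fin m) R :=
  of fun i j => (A ^ (j : ℕ) *ᵥ v) i

theorem krylovMatrix_mulVec_single [Semiring R] (A : Matrix n n R) (v : n → R) {m : ℕ}
    (j : Fin m) : krylovMatrix A v m *ᵥ Pi.single j 1 = A ^ (j : ℕ) *ᵥ v := by
  rw [mulVec_single_one]
  rfl

theorem IsHessenberg.det_krylovMatrix_ne_zero [CommRing R] [IsDomain R] {m : ℕ}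
    {A : Matrix (Fin (m + 1)) (Fin (m + 1)) R} (hA : IsHessenberg A)
    (hsub : ∀ i j : Fin (m + 1), (j : ℕ) + 1 = i → A i j ≠ 0) :
    (krylovMatrix A (Pi.single 0 1) (m + 1)).det ≠ 0 := by
  rw [det_of_isUpperTriangular (M := krylovMatrix _ _ _)
    fun i j (h : j < i) => hA.pow_mulVec_single_apply_eq_zero h]
  exact Finset.prod_ne_zero_iff.2 fun i _ => hA.pow_mulVec_single_apply_self_ne_zero hsub i.isLt

theorem pow_mul_eq_mul_pow [Semiring R] {κ : Type*} [Fintype κ] [DecidableEq κ]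
    {W : Matrix n n R} {T : Matrix κ κ R} {Q : Matrix n κ R} (h : W * Q = Q * T) (i : ℕ) :
    W ^ i * Q = Q * T ^ i := by
  induction i with
  | zero => simp
  | succ i ih => rw [pow_succ', Matrix.mul_assoc, ih, ← Matrix.mul_assoc, h, Matrix.mul_assoc,
      ← pow_succ']

theorem span_krylov_eq_map [CommRing R] {κ : Type*} [Fintype κ] [DecidableEq κ]
    {W : Matrix n n R} {T : Matrix κ κ R} {Q : Matrix n κ R} (h : W * Q = Q * T) (v : κ → R)
    (k : ℕ) :
    Submodule.span R (Set.range fun i : Fin k => W ^ (i : ℕ) *ᵥ (Q *ᵥ v)) =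
      (Submodule.span R (Set.range fun i : Fin k => T ^ (i : ℕ) *ᵥ v)).map Q.mulVecLin := by
  rw [Submodule.map_span, ← Set.range_comp]
  congr
  funext i
  simp [mulVec_mulVec, pow_mul_eq_mul_pow h]

end Krylov

section LanczosBasis

variable {𝕜 : Type*} [RCLike 𝕜] {n κ : Type*} [Fintype n] [Fintype κ] [DecidableEq κ]

theorem conjTranspose_mul_mul_apply (M : Matrix n κ 𝕜) (B : Matrix n n 𝕜) (N : Matrix n κ 𝕜)
    (i j : κ) :
    (Mᴴ * B * N) i j = star (M *ᵥ Pi.single i 1) ⬝ᵥ B *ᵥ N *ᵥ Pi.single j 1 := by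
  rw [star_mulVec, ← Pi.single_star, star_one, ← dotProduct_mulVec, mulVec_mulVec,
    mulVec_mulVec, single_dotProduct, one_mul, mulVec_single_one, col_apply]

variable [DecidableEq n]

theorem star_mulVec_dotProduct_pow_mulVec {A : Matrix n n 𝕜} (hA : A.IsHermitian) (v : n → 𝕜)
    (i s j : ℕ) :
    star (A ^ i *ᵥ v) ⬝ᵥ A ^ s *ᵥ A ^ j *ᵥ v = star v ⬝ᵥ A ^ (i + s + j) *ᵥ v := by
  rw [star_mulVec, conjTranspose_pow, hA.eq, ← dotProduct_mulVec, mulVec_mulVec, mulVec_mulVec,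
    ← pow_add, ← pow_add]

theorem conjTranspose_krylovMatrix_mul_pow_mul {A : Matrix n n 𝕜} (hA : A.IsHermitian)
    (v : n → 𝕜) (m s : ℕ) :
    (krylovMatrix A v m)ᴴ * A ^ s * krylovMatrix A v m =
      of fun i j : Fin m => star v ⬝ᵥ A ^ ((i : ℕ) + s + j) *ᵥ v := by
  ext i j
  rw [conjTranspose_mul_mul_apply, krylovMatrix_mulVec_single, krylovMatrix_mulVec_single,
    star_mulVec_dotProduct_pow_mulVec hA, of_apply]

theorem exists_lanczosBasis {m : ℕ} {W : Matrix n n 𝕜} (hW : W.IsHermitian) (b : n → 𝕜)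
    {T : Matrix (Fin (m + 1)) (Fin (m + 1)) 𝕜} (hT : T.IsHermitian) (v : Fin (m + 1) → 𝕜)
    (hK : IsUnit (krylovMatrix T v (m + 1)).det)
    (hmom : ∀ s, star v ⬝ᵥ T ^ s *ᵥ v = star b ⬝ᵥ W ^ s *ᵥ b) :
    ∃ Q : Matrix n (Fin (m + 1)) 𝕜, Qᴴ * Q = 1 ∧ W * Q = Q * T ∧ Q *ᵥ v = b := by
  let K := krylovMatrix T v (m + 1)
  let KW := krylovMatrix W b (m + 1)
  let Q := KW * K⁻¹
  have hgram : ∀ s, Qᴴ * W ^ s * Q = T ^ s := fun s => calc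
    Qᴴ * W ^ s * Q = K⁻¹ᴴ * (KWᴴ * W ^ s * KW) * K⁻¹ := by
      simp only [Q, conjTranspose_mul, Matrix.mul_assoc]
    _ = (K * K⁻¹)ᴴ * T ^ s * (K * K⁻¹) := by
      simp only [KW, conjTranspose_krylovMatrix_mul_pow_mul hW, ← hmom,
        ← conjTranspose_krylovMatrix_mul_pow_mul hT, K, conjTranspose_mul, Matrix.mul_assoc]
    _ = T ^ s := by rw [mul_nonsing_inv K hK, conjTranspose_one, Matrix.one_mul, Matrix.mul_one]
  have hQQ : Qᴴ * Q = 1 := by simpa using hgram 0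
  have hQWQ : Qᴴ * W * Q = T := by simpa using hgram 1
  refine ⟨Q, hQQ, ?_, ?_⟩
  · have hD : (W * Q - Q * T)ᴴ * (W * Q - Q * T) = 0 := calc
      _ = Qᴴ * W ^ 2 * Q - (Qᴴ * W * Q) * T - T * (Qᴴ * W * Q) + T * (Qᴴ * Q) * T := by
        simp only [conjTranspose_sub, conjTranspose_mul, hW.eq, hT.eq, Matrix.sub_mul,
          Matrix.mul_sub, Matrix.mul_assoc, sq]
        abel
      _ = 0 := by rw [hgram 2, hQWQ, hQQ, Matrix.mul_one, sq, sub_self, zero_sub, neg_add_cancel]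
    exact sub_eq_zero.mp (conjTranspose_mul_self_eq_zero.mp hD)
  · have hKe : K *ᵥ Pi.single 0 1 = v := by
      rw [krylovMatrix_mulVec_single, Fin.val_zero, pow_zero, one_mulVec]
    rw [← hKe, mulVec_mulVec, Matrix.mul_assoc, nonsing_inv_mul K hK, Matrix.mul_one,
      krylovMatrix_mulVec_single]
    simp

end LanczosBasis

section Minimization

variable {𝕜 : Type*} [RCLike 𝕜] {n : Type*} [Fintype n]

theorem re_star_sub_smul_dotProduct_mulVec {W : Matrix n n 𝕜} (hW : W.IsHermitian)
    (u w : n → 𝕜) (s : ℝ) :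
    RCLike.re (star (u - (s : 𝕜) • w) ⬝ᵥ W *ᵥ (u - (s : 𝕜) • w)) =
      RCLike.re (star u ⬝ᵥ W *ᵥ u) - 2 * s * RCLike.re (star u ⬝ᵥ W *ᵥ w) +
        s ^ 2 * RCLike.re (star w ⬝ᵥ W *ᵥ w) := by
  have hsym : RCLike.re (star w ⬝ᵥ W *ᵥ u) = RCLike.re (star u ⬝ᵥ W *ᵥ w) := by
    rw [← RCLike.conj_re, ← RCLike.star_def, star_dotProduct, star_star, star_mulVec, hW.eq,
      ← dotProduct_mulVec]
  simp only [star_sub, star_smul, RCLike.star_def, RCLike.conj_ofReal, sub_dotProduct,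
    mulVec_sub, dotProduct_sub, mulVec_smul, dotProduct_smul, smul_dotProduct, smul_eq_mul,
    map_sub, RCLike.re_ofReal_mul, hsym]
  ring

theorem star_sub_dotProduct_mulVec_eq_zero_of_forall_le {W : Matrix n n 𝕜} (hW : W.PosDef)
    {S : Submodule 𝕜 (n → 𝕜)} {x y : n → 𝕜} (hy : y ∈ S)
    (hmin : ∀ z ∈ S, RCLike.re (star (x - y) ⬝ᵥ W *ᵥ (x - y)) ≤
      RCLike.re (star (x - z) ⬝ᵥ W *ᵥ (x - z)))
    {v : n → 𝕜} (hv : v ∈ S) : star (x - y) ⬝ᵥ W *ᵥ v = 0 := by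
  set c := star (x - y) ⬝ᵥ W *ᵥ v
  set w := star c • v
  have hc : RCLike.re (star (x - y) ⬝ᵥ W *ᵥ w) = ‖c‖ ^ 2 := by
    rw [mulVec_smul, dotProduct_smul, smul_eq_mul, RCLike.star_def, RCLike.conj_mul,
      ← RCLike.ofReal_pow, RCLike.ofReal_re]
  have hB : 0 ≤ RCLike.re (star w ⬝ᵥ W *ᵥ w) := hW.posSemidef.re_dotProduct_nonneg w
  -- minimality along the ray `y + s • w` forces the linear term to vanish
  have hs : ∀ s : ℝ, 2 * s * ‖c‖ ^ 2 ≤ s ^ 2 * RCLike.re (star w ⬝ᵥ W *ᵥ w) := by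
    intro s
    have h := hmin (y + (s : 𝕜) • w) (S.add_mem hy (S.smul_mem _ (S.smul_mem _ hv)))
    rw [show x - (y + (s : 𝕜) • w) = x - y - (s : 𝕜) • w by abel,
      re_star_sub_smul_dotProduct_mulVec hW.isHermitian, hc] at h
    linarith
  set B := RCLike.re (star w ⬝ᵥ W *ᵥ w)
  set t := ‖c‖ ^ 2 / (B + 1)
  have ht : ‖c‖ ^ 2 = t * (B + 1) := by
    rw [div_mul_cancel₀ _ (by positivity)]
  have h := hs t
  rw [ht] at h
  have ht0 : t ^ 2 = 0 := le_antisymm (by nlinarith) (sq_nonneg t)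
  rw [pow_eq_zero_iff two_ne_zero] at ht0
  rwa [ht0, zero_mul, pow_eq_zero_iff two_ne_zero, norm_eq_zero] at ht

end Minimization

section TrailingBlock

variable {R : Type*} [CommRing R]

theorem mul_transpose_inv_apply_self {n : Type*} [Fintype n] [DecidableEq n] (M : Matrix n n R)
    (i : n) : (M * Mᵀ)⁻¹ i i = ∑ l, M⁻¹ l i ^ 2 := by
  rw [Matrix.mul_inv_rev, ← transpose_nonsing_inv, mul_apply]
  simp only [transpose_apply, sq]

theorem sum_sq_inv_apply_of_submatrix {n p : Type*} [Fintype n] [DecidableEq n] [Fintype p]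
    [DecidableEq p] {H : Matrix n n R} {e : p → n} (he : Function.Injective e)
    (hblock : ∀ a ∉ Set.range e, ∀ i, H a (e i) = 0) (hH : IsUnit H.det)
    (hL : IsUnit (H.submatrix e e).det) (j : p) :
    ∑ l, H⁻¹ l (e j) ^ 2 = ∑ i, (H.submatrix e e)⁻¹ i j ^ 2 := by
  set L := H.submatrix e e
  -- the `e j`-th column of `H⁻¹` is the `j`-th column of `L⁻¹`, extended by zero
  set w := Function.extend e (fun i => L⁻¹ i j) 0
  have hw_off : ∀ a ∉ Set.range e, w a = 0 := fun a ha => Function.extend_apply' _ _ _ ha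
  have hw_on : ∀ i, w (e i) = L⁻¹ i j := he.extend_apply _ _
  have hHw : H *ᵥ w = Pi.single (e j) 1 := by
    funext a
    rw [mulVec, dotProduct, ← Fintype.sum_of_injective e he (fun i => H a (e i) * L⁻¹ i j) _
      (fun l hl => by rw [hw_off l hl, mul_zero]) (fun i => by rw [hw_on])]
    by_cases ha : a ∈ Set.range e
    · obtain ⟨i, rfl⟩ := ha
      change (L * L⁻¹) i j = _
      simp only [mul_nonsing_inv L hL, one_apply, Pi.single_apply, he.eq_iff]
    · rw [Finset.sum_eq_zero fun i _ => by rw [hblock a ha i, zero_mul],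
        Pi.single_eq_of_ne (fun h => ha ⟨j, h.symm⟩)]
  have hcol : ∀ l, H⁻¹ l (e j) = w l := by
    have h : H⁻¹ *ᵥ Pi.single (e j) 1 = w := by
      rw [← hHw, mulVec_mulVec, nonsing_inv_mul H hH, one_mulVec]
    intro l
    rw [← h, mulVec_single_one, col_apply]
  refine (Fintype.sum_of_injective e he _ _ (fun l hl => ?_) (fun i => ?_)).symm
  · rw [hcol, hw_off l hl, sq, zero_mul]
  · rw [hcol, hw_on]

def trailingIndex (m k : ℕ) (i : Fin (m - k)) : Fin m :=
  ⟨k + i, by have := i.isLt; omega⟩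

theorem mul_transpose_inv_apply_trailingIndex {m k : ℕ} {H : Matrix (Fin m) (Fin m) R}
    (hH : H.IsLowerTriangular) (hdet : IsUnit H.det)
    (hL : IsUnit (H.submatrix (trailingIndex m k) (trailingIndex m k)).det) (j : Fin (m - k)) :
    (H * Hᵀ)⁻¹ (trailingIndex m k j) (trailingIndex m k j) =
      (H.submatrix (trailingIndex m k) (trailingIndex m k) *
        (H.submatrix (trailingIndex m k) (trailingIndex m k))ᵀ)⁻¹ j j := by
  have hinj : Function.Injective (trailingIndex m k) := fun i i' h => by
    simpa [trailingIndex, Fin.ext_iff] using h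
  have hblock : ∀ a ∉ Set.range (trailingIndex m k), ∀ i, H a (trailingIndex m k i) = 0 := by
    intro a ha i
    have hak : (a : ℕ) < k := by
      by_contra! h
      exact ha ⟨⟨a - k, by omega⟩, Fin.ext (by simp [trailingIndex]; omega)⟩
    exact hH (show a < trailingIndex m k i from Fin.lt_def.2 (by simp [trailingIndex]; omega))
  rw [mul_transpose_inv_apply_self, mul_transpose_inv_apply_self,
    sum_sq_inv_apply_of_submatrix hinj hblock hdet hL]

theorem inv_map_eq_map_inv {S n : Type*} [CommRing S] [Fintype n] [DecidableEq n]
    {M : Matrix n n R} (hM : IsUnit M.det) (f : R →+* S) : (M.map f)⁻¹ = M⁻¹.map f :=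
  inv_eq_left_inv (by rw [← Matrix.map_mul, nonsing_inv_mul M hM, Matrix.map_one f f.map_zero
    f.map_one])

end TrailingBlock

section Bidiagonal

variable {R : Type*} {m : ℕ}

def IsLowerBidiagonal [Zero R] (α β : ℕ → R) (H : Matrix (Fin m) (Fin m) R) : Prop :=
  ∀ i j : Fin m, H i j = if (i : ℕ) = j then α i else if (i : ℕ) = j + 1 then β j else 0

variable [CommRing R] {α β : ℕ → R} {H : Matrix (Fin m) (Fin m) R}

theorem IsLowerBidiagonal.isLowerTriangular (hH : IsLowerBidiagonal α β H) :
    H.IsLowerTriangular := fun i j (h : i < j) => by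
  rw [Fin.lt_def] at h
  rw [hH, if_neg (by omega), if_neg (by omega)]

theorem IsLowerBidiagonal.det_ne_zero [IsDomain R] (hH : IsLowerBidiagonal α β H)
    (hα : ∀ i < m, α i ≠ 0) : H.det ≠ 0 := by
  rw [det_of_isLowerTriangular H hH.isLowerTriangular]
  exact Finset.prod_ne_zero_iff.2 fun i _ => by rw [hH, if_pos rfl]; exact hα i i.isLt

theorem IsLowerBidiagonal.submatrix_trailingIndex (hH : IsLowerBidiagonal α β H) (k : ℕ) :
    IsLowerBidiagonal (fun i => α (k + i)) (fun j => β (k + j))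
      (H.submatrix (trailingIndex m k) (trailingIndex m k)) := by
  intro i j
  rw [submatrix_apply, hH]
  simp only [trailingIndex, Fin.val_mk, add_assoc, Nat.add_left_cancel_iff]

theorem IsLowerBidiagonal.isHessenberg_mul_transpose (hH : IsLowerBidiagonal α β H) :
    IsHessenberg (H * Hᵀ) := fun i j hij =>
  Finset.sum_eq_zero (s := Finset.univ) fun l _ => show H i l * Hᵀ l j = 0 by
    rcases le_or_gt (l : ℕ) j with h | h
    · rw [hH i l, if_neg (by omega), if_neg (by omega), zero_mul]
    · rw [transpose_apply, hH.isLowerTriangular (show j < l from h), mul_zero]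

theorem IsLowerBidiagonal.mul_transpose_apply_of_succ_eq (hH : IsLowerBidiagonal α β H)
    {i j : Fin m} (hij : (j : ℕ) + 1 = i) : (H * Hᵀ) i j = β j * α j := by
  rw [mul_apply, Finset.sum_eq_single j]
  · rw [transpose_apply, hH i j, hH j j, if_neg (by omega), if_pos hij.symm, if_pos rfl]
  · intro l _ hl
    rcases lt_or_gt_of_ne hl with h | h
    · rw [Fin.lt_def] at h
      rw [hH i l, if_neg (by omega), if_neg (by omega), zero_mul]
    · rw [transpose_apply, hH.isLowerTriangular h, mul_zero]
  · simp

end Bidiagonal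

section QuadraticForms

variable {𝕜 : Type*} [RCLike 𝕜] {n κ : Type*} [Fintype n] [Fintype κ]

theorem sum_norm_sq_eq_re_star_dotProduct (v : n → 𝕜) :
    ∑ i, ‖v i‖ ^ 2 = RCLike.re (star v ⬝ᵥ v) := by
  simp only [dotProduct, Pi.star_apply, RCLike.star_def, RCLike.conj_mul, map_sum,
    RCLike.re_ofReal_pow]

theorem re_star_dotProduct_mulVec_of_mulVec_eq_single [DecidableEq n] {A : Matrix n n 𝕜}
    (hA : IsUnit A.det) {u : n → 𝕜} {k : n} {ρ : 𝕜} (hu : A *ᵥ u = Pi.single k ρ) :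
    RCLike.re (star u ⬝ᵥ A *ᵥ u) = ‖ρ‖ ^ 2 * RCLike.re (A⁻¹ k k) := by
  have huk : u k = A⁻¹ k k * ρ := by
    rw [← one_mulVec u, ← nonsing_inv_mul A hA, ← mulVec_mulVec, hu, mulVec_single]
    simp
  rw [hu, dotProduct_single, Pi.star_apply, huk, star_mul', RCLike.star_def,
    mul_assoc, RCLike.conj_mul, ← RCLike.ofReal_pow, RCLike.re_mul_ofReal, RCLike.conj_re,
    mul_comm]

theorem star_mulVec_dotProduct_mulVec_mulVec (Q : Matrix n κ 𝕜) (M : Matrix n n 𝕜) (u v : κ → 𝕜) :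
    star (Q *ᵥ u) ⬝ᵥ M *ᵥ Q *ᵥ v = star u ⬝ᵥ (Qᴴ * M * Q) *ᵥ v := by
  rw [star_mulVec, ← dotProduct_mulVec, mulVec_mulVec, mulVec_mulVec, Matrix.mul_assoc]

theorem sum_norm_sq_single [DecidableEq n] (k : n) (ρ : 𝕜) :
    ∑ i, ‖(Pi.single k ρ : n → 𝕜) i‖ ^ 2 = ‖ρ‖ ^ 2 := by
  rw [Fintype.sum_eq_single k fun i hi => by rw [Pi.single_eq_of_ne hi, norm_zero, sq, zero_mul],
    Pi.single_eq_same]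

theorem sum_norm_sq_mulVec [DecidableEq κ] {Q : Matrix n κ 𝕜} (hQ : Qᴴ * Q = 1) (v : κ → 𝕜) :
    ∑ i, ‖(Q *ᵥ v) i‖ ^ 2 = ∑ i, ‖v i‖ ^ 2 := by
  rw [sum_norm_sq_eq_re_star_dotProduct, sum_norm_sq_eq_re_star_dotProduct, star_mulVec,
    ← dotProduct_mulVec, mulVec_mulVec, hQ, one_mulVec]

end QuadraticForms

section ConjugateGradient

variable {𝕜 : Type*} [RCLike 𝕜] {ι : Type*} [Fintype ι] [DecidableEq ι]

theorem re_error_energy_eq_residual_mul_inv_apply {m : ℕ} {W : Matrix ι ι 𝕜} (hW : W.PosDef)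
    {b : ι → 𝕜} {T : Matrix (Fin (m + 1)) (Fin (m + 1)) 𝕜} (hT : T.IsHermitian)
    (hTH : IsHessenberg T) (hsub : ∀ i j : Fin (m + 1), (j : ℕ) + 1 = i → T i j ≠ 0)
    (hTdet : IsUnit T.det) (hmom : ∀ s : ℕ, (T ^ s) 0 0 = star b ⬝ᵥ W ^ s *ᵥ b)
    {x xk : ι → 𝕜} (hx : W *ᵥ x = b) {k : ℕ} (hk : k < m + 1)
    (hxk : xk ∈ Submodule.span 𝕜 (Set.range fun i : Fin k => W ^ (i : ℕ) *ᵥ b))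
    (hmin : ∀ y ∈ Submodule.span 𝕜 (Set.range fun i : Fin k => W ^ (i : ℕ) *ᵥ b),
      RCLike.re (star (x - xk) ⬝ᵥ W *ᵥ (x - xk)) ≤ RCLike.re (star (x - y) ⬝ᵥ W *ᵥ (x - y))) :
    RCLike.re (star (x - xk) ⬝ᵥ W *ᵥ (x - xk)) =
      (∑ j, ‖(b - W *ᵥ xk) j‖ ^ 2) * RCLike.re (T⁻¹ ⟨k, hk⟩ ⟨k, hk⟩) := by
  set e₀ : Fin (m + 1) → 𝕜 := Pi.single 0 1
  obtain ⟨Q, hQQ, hWQ, hQe⟩ := exists_lanczosBasis hW.isHermitian b hT e₀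
    (hTH.det_krylovMatrix_ne_zero hsub).isUnit (fun s => by simp [e₀, hmom])
  have hQWQ : Qᴴ * W * Q = T := by rw [Matrix.mul_assoc, hWQ, ← Matrix.mul_assoc, hQQ,
    Matrix.one_mul]
  have hxQ : x = Q *ᵥ (T⁻¹ *ᵥ e₀) := by
    refine mulVec_injective_of_isUnit hW.isUnit ?_
    rw [hx, mulVec_mulVec, mulVec_mulVec, hWQ, Matrix.mul_assoc,
      mul_nonsing_inv T hTdet, Matrix.mul_one, hQe]
  rw [← hQe, span_krylov_eq_map hWQ] at hxk hmin
  obtain ⟨y, hy, rfl⟩ := hxk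
  simp only [mulVecLin_apply] at hmin ⊢
  set u := T⁻¹ *ᵥ e₀ - y
  have he : x - Q *ᵥ y = Q *ᵥ u := by rw [hxQ, mulVec_sub]
  have hr : b - W *ᵥ (Q *ᵥ y) = Q *ᵥ (T *ᵥ u) := by
    rw [← hx, ← mulVec_sub, he, mulVec_mulVec, hWQ, ← mulVec_mulVec]
  have hlow : ∀ j : Fin (m + 1), (j : ℕ) < k → (T *ᵥ u) j = 0 := by
    have hstar : star (T *ᵥ u) = star u ᵥ* T := by rw [star_mulVec, hT.eq]
    have horth : ∀ i < k, star (T *ᵥ u) ⬝ᵥ T ^ i *ᵥ e₀ = 0 := fun i hi => by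
      have h := star_sub_dotProduct_mulVec_eq_zero_of_forall_le hW
        (Submodule.mem_map_of_mem hy) hmin
        (Submodule.mem_map_of_mem (Submodule.subset_span ⟨⟨i, hi⟩, rfl⟩))
      simp only [mulVecLin_apply] at h
      rwa [he, star_mulVec_dotProduct_mulVec_mulVec, hQWQ, dotProduct_mulVec, ← hstar] at h
    intro j hj
    simpa using hTH.apply_eq_zero_of_dotProduct_eq_zero hsub horth j hj
  set ρ := (T *ᵥ u) ⟨k, hk⟩
  have hρ : T *ᵥ u = Pi.single ⟨k, hk⟩ ρ :=
    hTH.eq_single_of_add_mulVec_eq_single hk (hTH.apply_eq_zero_of_mem_span hy) (by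
      rw [← mulVec_add, sub_add_cancel, mulVec_mulVec, mul_nonsing_inv T hTdet, one_mulVec]) hlow
  rw [he, star_mulVec_dotProduct_mulVec_mulVec, hQWQ,
    re_star_dotProduct_mulVec_of_mulVec_eq_single hTdet hρ, hr, sum_norm_sq_mulVec hQQ, hρ,
    sum_norm_sq_single]

end ConjugateGradient

end Lanczos

open Lanczos

/-- In the setting of the Lanczos tridiagonalization `T = H Hᵀ` of a Hermitian
positive definite pair `(W, b)`, with `L` the trailing principal submatrix of `H` on rows
and columns `k+1, …, n+1`, the `k`-th conjugate gradient error `e_k = W⁻¹ b - x_k` and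
residual `r_k = b - W x_k` satisfy `‖e_k‖_W = ‖r_k‖₂ · √(((L Lᵀ)⁻¹)_{11})`. -/
theorem stmt_12 (N n k : ℕ) (hkn : k < n + 1)
    (W : Matrix (Fin N) (Fin N) ℂ) (hW : W.PosDef)
    (b : Fin N → ℂ)
    (α β : ℕ → ℝ) (hα : ∀ i, i < n + 1 → 0 < α i) (hβ : ∀ i, i < n → 0 < β i)
    (H : Matrix (Fin (n + 1)) (Fin (n + 1)) ℝ)
    (hH : ∀ i j : Fin (n + 1), H i j =
      if (i : ℕ) = (j : ℕ) then α i
      else if (i : ℕ) = (j : ℕ) + 1 then β j else 0)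
    (T : Matrix (Fin (n + 1)) (Fin (n + 1)) ℝ) (hT : T = H * Hᵀ)
    (hmom : ∀ m : ℕ, ((T ^ m) 0 0 : ℂ) = star b ⬝ᵥ (W ^ m).mulVec b)
    (x xk : Fin N → ℂ) (hx : W.mulVec x = b)
    (hxk : xk ∈ Submodule.span ℂ (Set.range fun i : Fin k => (W ^ (i : ℕ)).mulVec b))
    (hmin : ∀ y ∈ Submodule.span ℂ (Set.range fun i : Fin k => (W ^ (i : ℕ)).mulVec b),
      (star (x - xk) ⬝ᵥ W.mulVec (x - xk)).re ≤
        (star (x - y) ⬝ᵥ W.mulVec (x - y)).re)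
    (L : Matrix (Fin (n + 1 - k)) (Fin (n + 1 - k)) ℝ)
    (hL : ∀ i j : Fin (n + 1 - k),
      L i j = H ⟨k + i, by have := i.isLt; omega⟩ ⟨k + j, by have := j.isLt; omega⟩) :
    Real.sqrt ((star (x - xk) ⬝ᵥ W.mulVec (x - xk)).re) =
      Real.sqrt (∑ j, ‖(b - W.mulVec xk) j‖ ^ 2) *
        Real.sqrt ((L * Lᵀ)⁻¹ ⟨0, by omega⟩ ⟨0, by omega⟩) := by
  have hH' : IsLowerBidiagonal α β H := hH
  have hHdet : IsUnit H.det := (hH'.det_ne_zero fun i hi => (hα i hi).ne').isUnit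
  have hL' : L = H.submatrix (trailingIndex (n + 1) k) (trailingIndex (n + 1) k) := Matrix.ext hL
  have hLdet : IsUnit (H.submatrix (trailingIndex (n + 1) k) (trailingIndex (n + 1) k)).det :=
    ((hH'.submatrix_trailingIndex k).det_ne_zero fun i hi => (hα _ (by omega)).ne').isUnit
  have hTdet : IsUnit T.det := by rw [hT, det_mul, det_transpose]; exact hHdet.mul hHdet
  set T' := T.map Complex.ofRealHom with hT'
  have hT'det : IsUnit T'.det := by
    rw [hT', ← RingHom.mapMatrix_apply, ← RingHom.map_det]; exact hTdet.map _
  have hT'herm : T'.IsHermitian :=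
    (isHermitian_iff_isSymm.2 (hT ▸ isSymm_mul_transpose_self H)).map _ fun _ => by simp
  have hT'hess : IsHessenberg T' := (hT ▸ hH'.isHessenberg_mul_transpose).map (map_zero _)
  have hT'sub : ∀ i j : Fin (n + 1), (j : ℕ) + 1 = i → T' i j ≠ 0 := fun i j hij => by
    rw [hT', map_apply, hT, hH'.mul_transpose_apply_of_succ_eq hij, Complex.ofRealHom_eq_coe]
    exact_mod_cast (mul_pos (hβ j (by omega)) (hα j (by omega))).ne'
  have hinv : (T'⁻¹ ⟨k, hkn⟩ ⟨k, hkn⟩).re = (L * Lᵀ)⁻¹ ⟨0, by omega⟩ ⟨0, by omega⟩ := by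
    rw [hT', inv_map_eq_map_inv hTdet, map_apply, Complex.ofRealHom_eq_coe, Complex.ofReal_re,
      hT, hL']
    exact mul_transpose_inv_apply_trailingIndex hH'.isLowerTriangular hHdet hLdet
      (⟨0, by omega⟩ : Fin (n + 1 - k))
  have henergy : (star (x - xk) ⬝ᵥ W *ᵥ (x - xk)).re =
      (∑ j, ‖(b - W *ᵥ xk) j‖ ^ 2) * (T'⁻¹ ⟨k, hkn⟩ ⟨k, hkn⟩).re :=
    re_error_energy_eq_residual_mul_inv_apply hW hT'herm hT'hess hT'sub hT'det
      (fun s => by rw [hT', ← Matrix.map_pow]; exact hmom s) hx hkn hxk hmin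
  rw [henergy, hinv, Real.sqrt_mul (by positivity)]
end
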